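/- arXiv:1607.05138 — 6 statements merged into one kernel-verified Lean document; each statement's English description precedes it below -/
import Mathlib

section
/- Let V be a type and let c : V × V → ℤ be a finitely supported function with c(v,v) = 0 for every v ∈ V and c(a,b) ≥ 0 for all a, b ∈ V. Write ∂c(v) = Σ_u (c(u,v) − c(v,u)) (a finite sum). If z ∈ V satisfies ∂c(z) < 0, then there exist an integer N ≥ 1 and vertices v₀, v₁, …, v_N ∈ V such that: (1) v₀ = z; (2) c(v_{i−1}, v_i) > 0 for every i = 1, …, N; (3) ∂c(v_N) > 0; and (4) the ordered pairs (v_{i−1}, v_i), i = 1, …, N, are pairwise distinct. Symmetrically, if ∂c(z) > 0, then there exist N ≥ 1 and vertices v₀, …, v_N with v_N = z, c(v_{i−1}, v_i) > 0 for every i, ∂c(v₀) < 0, and the ordered pairs (v_{i−1}, v_i) pairwise distinct. -/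
/-- The boundary of an integer 1-chain `c : V × V → ℤ`:
`∂c(v) = Σ_u (c(u,v) − c(v,u))` (a finite sum when `c` is finitely supported). -/
noncomputable def chainBd {V : Type*} (c : V × V → ℤ) (v : V) : ℤ :=
  ∑ᶠ u : V, (c (u, v) - c (v, u))

/-!
The set `R` of vertices reachable from `z` along edges of positive multiplicity is finite, and
no such edge leaves `R`. Hence `∑_{v ∈ R} ∂c(v)` counts only the multiplicity entering `R` from
outside and is nonnegative, so if `∂c(z) < 0` some `t ∈ R` has `∂c(t) > 0`. Cutting loops out of
a walk from `z` to `t` gives a path without repeated vertices, hence without repeated edges.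
The case `∂c(z) > 0` is the first one for the reversed chain `c ∘ Prod.swap`.
-/

namespace Relation.ReflTransGen

variable {α : Type*} {r : α → α → Prop} {a b : α}

theorem exists_injective_fin_path (h : ReflTransGen r a b) :
    ∃ (N : ℕ) (w : Fin (N + 1) → α), w 0 = a ∧ w (Fin.last N) = b ∧
      (∀ i : Fin N, r (w i.castSucc) (w i.succ)) ∧ Function.Injective w := by
  induction h with
  | refl =>
    exact ⟨0, fun _ => a, rfl, rfl, Fin.elim0, fun i j _ => Subsingleton.elim (α := Fin 1) i j⟩
  | @tail b c _ hbc ih =>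
    obtain ⟨N, w, hw0, hwN, hr, hinj⟩ := ih
    by_cases hc : c ∈ Set.range w
    · obtain ⟨k, rfl⟩ := hc
      refine ⟨k, fun i => w (Fin.castLE k.isLt i), by simpa using hw0, rfl, fun i => ?_,
        hinj.comp (Fin.castLE_injective _)⟩
      exact hr (Fin.castLE (Nat.le_of_lt_succ k.isLt) i)
    · refine ⟨N + 1, Fin.snoc w c, by simpa using hw0, Fin.snoc_last .., fun i => ?_,
        Fin.snoc_injective_of_injective hinj hc⟩
      induction i using Fin.lastCases with
      | last => simpa [hwN] using hbc
      | cast j => rw [Fin.succ_castSucc, Fin.snoc_castSucc, Fin.snoc_castSucc]; exact hr j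

theorem exists_fin_path_injective_edges (h : ReflTransGen r a b) (hab : a ≠ b) :
    ∃ (N : ℕ) (w : Fin (N + 1) → α), 1 ≤ N ∧ w 0 = a ∧ w (Fin.last N) = b ∧
      (∀ i : Fin N, r (w i.castSucc) (w i.succ)) ∧
      Function.Injective (fun i : Fin N => (w i.castSucc, w i.succ)) := by
  obtain ⟨N, w, hw0, hwN, hr, hinj⟩ := h.exists_injective_fin_path
  refine ⟨N, w, Nat.one_le_iff_ne_zero.mpr ?_, hw0, hwN, hr,
    fun i j hij => Fin.castSucc_injective _ (hinj (congrArg Prod.fst hij))⟩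
  rintro rfl
  exact hab (hw0.symm.trans hwN)

end Relation.ReflTransGen

section Chain

variable {V : Type*} (c : V × V → ℤ)

theorem chainBd_comp_swap (v : V) : chainBd (c ∘ Prod.swap) v = -chainBd c v := by
  rw [chainBd, chainBd, ← finsum_neg_distrib]
  exact finsum_congr fun u => by simp

theorem chainBd_eq_sum {T : Finset V} (hT : ∀ p ∈ Function.support c, p.1 ∈ T ∧ p.2 ∈ T)
    (v : V) : chainBd c v = ∑ u ∈ T, (c (u, v) - c (v, u)) := by
  refine finsum_eq_sum_of_support_subset _ fun u hu => ?_
  by_cases huv : c (u, v) = 0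
  · have hvu : c (v, u) ≠ 0 := fun h => hu (by simp [huv, h])
    exact (hT _ hvu).2
  · exact (hT _ huv).1

variable {c}

theorem sum_chainBd_nonneg (hfin : (Function.support c).Finite) (hnonneg : ∀ a b, 0 ≤ c (a, b))
    {S : Finset V} (hS : ∀ v ∈ S, ∀ u, 0 < c (v, u) → u ∈ S) :
    0 ≤ ∑ v ∈ S, chainBd c v := by
  classical
  set T := S ∪ hfin.toFinset.image Prod.fst ∪ hfin.toFinset.image Prod.snd
  have hT : ∀ p ∈ Function.support c, p.1 ∈ T ∧ p.2 ∈ T := fun p hp => by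
    have hp' : p ∈ hfin.toFinset := hfin.mem_toFinset.mpr hp
    exact ⟨Finset.mem_union_left _ (Finset.mem_union_right _ (Finset.mem_image_of_mem _ hp')),
      Finset.mem_union_right _ (Finset.mem_image_of_mem _ hp')⟩
  have hST : S ⊆ T := fun v hv => by simp [T, hv]
  have hout : ∀ v ∈ S, ∑ u ∈ T, c (v, u) = ∑ u ∈ S, c (v, u) := fun v hv =>
    (Finset.sum_subset hST fun u _ hu =>
      ((hnonneg v u).eq_or_lt.resolve_right fun h => hu (hS v hv u h)).symm).symm
  calc (0 : ℤ) ≤ ∑ v ∈ S, ∑ u ∈ T, c (u, v) - ∑ v ∈ S, ∑ u ∈ S, c (u, v) := by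
        rw [sub_nonneg]
        exact Finset.sum_le_sum fun v _ =>
          Finset.sum_le_sum_of_subset_of_nonneg hST fun u _ _ => hnonneg u v
    _ = ∑ v ∈ S, chainBd c v := by
        simp only [chainBd_eq_sum c hT, Finset.sum_sub_distrib, Finset.sum_congr rfl hout]
        rw [Finset.sum_comm (s := S) (t := S)]

theorem finite_setOf_reflTransGen (hfin : (Function.support c).Finite) (z : V) :
    {x | Relation.ReflTransGen (fun a b => 0 < c (a, b)) z x}.Finite := by
  refine ((hfin.image Prod.snd).insert z).subset fun x hx => ?_
  obtain rfl | ⟨y, -, hyx⟩ := hx.cases_tail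
  · exact Set.mem_insert _ _
  · exact Set.mem_insert_of_mem _ ⟨(y, x), hyx.ne', rfl⟩

theorem exists_reflTransGen_chainBd_pos (hfin : (Function.support c).Finite)
    (hnonneg : ∀ a b, 0 ≤ c (a, b)) {z : V} (hz : chainBd c z < 0) :
    ∃ t, Relation.ReflTransGen (fun a b => 0 < c (a, b)) z t ∧ 0 < chainBd c t := by
  by_contra! h
  set S := (finite_setOf_reflTransGen hfin z).toFinset
  have hS : ∀ v ∈ S, ∀ u, 0 < c (v, u) → u ∈ S := fun v hv u hvu => by
    simp only [S, Set.Finite.mem_toFinset] at hv ⊢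
    exact hv.tail hvu
  have hneg : ∑ v ∈ S, chainBd c v < ∑ v ∈ S, 0 :=
    Finset.sum_lt_sum (fun v hv => h v (by simpa [S] using hv))
      ⟨z, by simpa [S] using .refl, hz⟩
  exact (sum_chainBd_nonneg hfin hnonneg hS).not_gt (by simpa using hneg)

theorem exists_chainBd_neg_reflTransGen (hfin : (Function.support c).Finite)
    (hnonneg : ∀ a b, 0 ≤ c (a, b)) {z : V} (hz : 0 < chainBd c z) :
    ∃ s, Relation.ReflTransGen (fun a b => 0 < c (a, b)) s z ∧ chainBd c s < 0 := by
  have hfin' : (Function.support (c ∘ Prod.swap)).Finite := by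
    rw [Function.support_comp_eq_preimage]
    exact hfin.preimage Prod.swap_injective.injOn
  obtain ⟨s, hzs, hs⟩ := exists_reflTransGen_chainBd_pos hfin' (fun a b => hnonneg b a)
    (z := z) (by rw [chainBd_comp_swap]; omega)
  rw [chainBd_comp_swap] at hs
  exact ⟨s, Relation.ReflTransGen.swap _ _ hzs, by omega⟩

end Chain

theorem statement0_general {V : Type*} (c : V × V → ℤ)
    (hfin : (Function.support c).Finite)
    (hnonneg : ∀ a b : V, 0 ≤ c (a, b))
    (z : V) :
    (chainBd c z < 0 →
      ∃ (N : ℕ) (v : Fin (N + 1) → V), 1 ≤ N ∧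
        v 0 = z ∧
        (∀ i : Fin N, 0 < c (v i.castSucc, v i.succ)) ∧
        0 < chainBd c (v (Fin.last N)) ∧
        Function.Injective (fun i : Fin N => (v i.castSucc, v i.succ))) ∧
    (0 < chainBd c z →
      ∃ (N : ℕ) (v : Fin (N + 1) → V), 1 ≤ N ∧
        v (Fin.last N) = z ∧
        (∀ i : Fin N, 0 < c (v i.castSucc, v i.succ)) ∧
        chainBd c (v 0) < 0 ∧
        Function.Injective (fun i : Fin N => (v i.castSucc, v i.succ))) := by
  constructor
  · intro hz
    obtain ⟨t, hzt, ht⟩ := exists_reflTransGen_chainBd_pos hfin hnonneg hz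
    obtain ⟨N, v, hN, hv0, hvN, hpos, hinj⟩ :=
      hzt.exists_fin_path_injective_edges (ne_of_apply_ne (chainBd c) (hz.trans ht).ne)
    exact ⟨N, v, hN, hv0, hpos, hvN ▸ ht, hinj⟩
  · intro hz
    obtain ⟨s, hsz, hs⟩ := exists_chainBd_neg_reflTransGen hfin hnonneg hz
    obtain ⟨N, v, hN, hv0, hvN, hpos, hinj⟩ :=
      hsz.exists_fin_path_injective_edges (ne_of_apply_ne (chainBd c) (hs.trans hz).ne)
    exact ⟨N, v, hN, hvN, hpos, hv0 ▸ hs, hinj⟩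

/-- From any point of negative boundary multiplicity of a nonnegative finitely supported
1-chain one can select a chain of pairwise distinct oriented edges, each with positive
multiplicity, ending at a point of positive boundary multiplicity; and symmetrically. -/
theorem statement0 {V : Type*} (c : V × V → ℤ)
    (hfin : (Function.support c).Finite)
    (hloop : ∀ v : V, c (v, v) = 0)
    (hnonneg : ∀ a b : V, 0 ≤ c (a, b))
    (z : V) :
    (chainBd c z < 0 →
      ∃ (N : ℕ) (v : Fin (N + 1) → V), 1 ≤ N ∧
        v 0 = z ∧
        (∀ i : Fin N, 0 < c (v i.castSucc, v i.succ)) ∧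
        0 < chainBd c (v (Fin.last N)) ∧
        Function.Injective (fun i : Fin N => (v i.castSucc, v i.succ))) ∧
    (0 < chainBd c z →
      ∃ (N : ℕ) (v : Fin (N + 1) → V), 1 ≤ N ∧
        v (Fin.last N) = z ∧
        (∀ i : Fin N, 0 < c (v i.castSucc, v i.succ)) ∧
        chainBd c (v 0) < 0 ∧
        Function.Injective (fun i : Fin N => (v i.castSucc, v i.succ))) :=
  statement0_general c hfin hnonneg z
end

section
/- Let p ≥ 2 be an integer, V a type, and c : V × V → ℤ a finitely supported function with loop-free antisymmetric support and 0 ≤ c(a,b) ≤ p − 1 for all a, b. Suppose z ∈ V satisfies ∂c(z) ≤ −p, and suppose v₀ = z, v₁, …, v_N ∈ V (with N ≥ 1) are vertices such that c(v_{i−1}, v_i) > 0 for every i = 1, …, N, ∂c(v_N) ≥ 1, and the ordered pairs (v_{i−1}, v_i) are pairwise distinct. Define c¹ : V × V → ℤ by setting, for each i = 1, …, N, c¹(v_{i−1}, v_i) = 0 and c¹(v_i, v_{i−1}) = p − c(v_{i−1}, v_i), and c¹ = c on all ordered pairs not of the form (v_{i−1}, v_i) or (v_i, v_{i−1}). Then: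 (1) c¹ is finitely supported, has loop-free antisymmetric support, and 0 ≤ c¹(a,b) ≤ p − 1 for all a, b; (2) c¹(a,b) − c¹(b,a) ≡ c(a,b) − c(b,a) (mod p) for all a, b; (3) ∂c¹(z) = ∂c(z) + p; (4) ∂c¹(v_N) = ∂c(v_N) − p, so that |∂c¹(v_N)| ≤ |∂c(v_N)| + p − 2; (5) ∂c¹(v) = ∂c(v) for every v ∉ {z, v_N}; and (6) Σ_v |∂c¹(v)| ≤ Σ_v |∂c(v)| − 2. -/
/-!
On every path edge the multiplicity `θ` of `(vᵢ₋₁, vᵢ)` is replaced by the multiplicity `p − θ`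
of `(vᵢ, vᵢ₋₁)`, so the antisymmetrization `c(a,b) − c(b,a)` changes by exactly `−p` times that
of the path chain `Σᵢ [vᵢ₋₁, vᵢ]`. This preserves the class modulo `p`; and since `∂` only sees
the antisymmetrization and is additive, `∂c¹ = ∂c − p ∂(path) = ∂c + p (δ_z − δ_{v_N})` by
telescoping. The boundary mass then drops by `p` at `z` (as `∂c(z) ≤ −p`) and grows by at most
`p − 2` at `v_N` (as `∂c(v_N) ≥ 1`).
-/

open Function

section ChainBoundary

variable {V : Type*}

theorem finite_support_chainBd_summand {c : V × V → ℤ} (hc : (support c).Finite) (w : V) :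
    (support fun u => c (u, w) - c (w, u)).Finite := by
  refine ((hc.image Prod.fst).union (hc.image Prod.snd)).subset fun u hu => ?_
  by_cases h : c (u, w) = 0
  · exact Or.inr ⟨(w, u), by simp_all, rfl⟩
  · exact Or.inl ⟨(u, w), h, rfl⟩

theorem finite_support_chainBd {c : V × V → ℤ} (hc : (support c).Finite) :
    (support (chainBd c)).Finite := by
  refine ((hc.image Prod.fst).union (hc.image Prod.snd)).subset fun w hw => ?_
  by_contra hout
  have hin : ∀ u, c (u, w) = 0 := fun u => by_contra fun h => hout (Or.inr ⟨_, h, rfl⟩)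
  have hout : ∀ u, c (w, u) = 0 := fun u => by_contra fun h => hout (Or.inl ⟨_, h, rfl⟩)
  simp [chainBd, hin, hout] at hw

theorem chainBd_sum {ι : Type*} (s : Finset ι) {c : ι → V × V → ℤ}
    (hc : ∀ i ∈ s, (support (c i)).Finite) (w : V) :
    chainBd (∑ i ∈ s, c i) w = ∑ i ∈ s, chainBd (c i) w := by
  simp only [chainBd, Finset.sum_apply, ← Finset.sum_sub_distrib]
  exact finsum_sum_comm s _ fun i hi => finite_support_chainBd_summand (hc i hi) w

theorem chainBd_single [DecidableEq V] (a b w : V) :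
    chainBd (Pi.single (a, b) 1) w = (if w = b then 1 else 0) - (if w = a then 1 else 0) := by
  set e : V × V → ℤ := Pi.single (a, b) 1
  have hin : ∑ᶠ u, e (u, w) = if w = b then 1 else 0 := by
    rw [finsum_eq_single _ a fun u hu => by simp [e, hu]]
    simp [e, Pi.single_apply, eq_comm]
  have hout : ∑ᶠ u, e (w, u) = if w = a then 1 else 0 := by
    rw [finsum_eq_single _ b fun u hu => by simp [e, hu]]
    simp [e, Pi.single_apply]
  rw [chainBd, finsum_sub_distrib, hin, hout]
  · exact (Set.finite_singleton a).subset fun u hu => by_contra fun h => hu (by simp_all [e])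
  · exact (Set.finite_singleton b).subset fun u hu => by_contra fun h => hu (by simp_all [e])

theorem chainBd_eq_sub_mul {c c' d : V × V → ℤ} (k : ℤ) (hc : (support c).Finite)
    (hd : (support d).Finite)
    (h : ∀ a b, c' (a, b) - c' (b, a) = c (a, b) - c (b, a) - k * (d (a, b) - d (b, a)))
    (w : V) : chainBd c' w = chainBd c w - k * chainBd d w := by
  have hd' := finite_support_chainBd_summand hd w
  simp only [chainBd, h]
  rw [mul_finsum' _ _ hd', finsum_sub_distrib (finite_support_chainBd_summand hc w)
    (hd'.subset (support_mul_subset_right _ _))]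

theorem Fin.sum_univ_succ_sub_castSucc {M : Type*} [AddCommGroup M] {n : ℕ}
    (f : Fin (n + 1) → M) : ∑ i : Fin n, (f i.succ - f i.castSucc) = f (Fin.last n) - f 0 := by
  induction n with
  | zero => simp
  | succ n ih =>
    rw [Fin.sum_univ_castSucc, ← Fin.succ_last]
    simp only [Fin.succ_castSucc]
    rw [ih fun i => f i.castSucc]
    simp

section Path

variable [DecidableEq V] {N : ℕ}

def pathChain (v : Fin (N + 1) → V) : V × V → ℤ :=
  ∑ i : Fin N, Pi.single (v i.castSucc, v i.succ) 1

theorem pathChain_apply (v : Fin (N + 1) → V) (e : V × V) :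
    pathChain v e = ∑ i : Fin N, if e = (v i.castSucc, v i.succ) then 1 else 0 := by
  simp [pathChain, Finset.sum_apply, Pi.single_apply]

theorem pathChain_apply_of_forall_ne {v : Fin (N + 1) → V} {e : V × V}
    (he : ∀ i : Fin N, e ≠ (v i.castSucc, v i.succ)) : pathChain v e = 0 :=
  (pathChain_apply v e).trans (Finset.sum_eq_zero fun i _ => if_neg (he i))

theorem finite_support_pathChain (v : Fin (N + 1) → V) : (support (pathChain v)).Finite :=
  (Set.finite_range fun i : Fin N => (v i.castSucc, v i.succ)).subset fun _ he => by_contra fun h =>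
    he (pathChain_apply_of_forall_ne fun i hi => h ⟨i, hi.symm⟩)

theorem chainBd_pathChain (v : Fin (N + 1) → V) (w : V) :
    chainBd (pathChain v) w =
      (if w = v (Fin.last N) then 1 else 0) - (if w = v 0 then 1 else 0) := by
  rw [pathChain, chainBd_sum _ fun i _ => (Set.finite_singleton _).subset Pi.support_single_subset]
  simp only [chainBd_single]
  exact Fin.sum_univ_succ_sub_castSucc fun j => if w = v j then 1 else 0

theorem pathChain_apply_edge {v : Fin (N + 1) → V}
    (hinj : Injective fun i : Fin N => (v i.castSucc, v i.succ)) (i : Fin N) :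
    pathChain v (v i.castSucc, v i.succ) = 1 := by
  simp [pathChain_apply, hinj.eq_iff]

end Path

theorem edge_trichotomy {N : ℕ} (v : Fin (N + 1) → V) (e : V × V) :
    (∃ i : Fin N, e = (v i.castSucc, v i.succ)) ∨ (∃ i : Fin N, e = (v i.succ, v i.castSucc)) ∨
      ∀ i : Fin N, e ≠ (v i.castSucc, v i.succ) ∧ e ≠ (v i.succ, v i.castSucc) := by
  by_cases hE : ∃ i : Fin N, e = (v i.castSucc, v i.succ)
  · exact Or.inl hE
  by_cases hR : ∃ i : Fin N, e = (v i.succ, v i.castSucc)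
  · exact Or.inr (Or.inl hR)
  simp only [not_exists] at hE hR
  exact Or.inr (Or.inr fun i => ⟨hE i, hR i⟩)

structure IsPathReversal {N : ℕ} (p : ℤ) (c : V × V → ℤ) (v : Fin (N + 1) → V)
    (c' : V × V → ℤ) : Prop where
  apply_edge : ∀ i : Fin N, c' (v i.castSucc, v i.succ) = 0
  apply_reverse_edge : ∀ i : Fin N, c' (v i.succ, v i.castSucc) = p - c (v i.castSucc, v i.succ)
  apply_of_forall_ne : ∀ e : V × V,
    (∀ i : Fin N, e ≠ (v i.castSucc, v i.succ) ∧ e ≠ (v i.succ, v i.castSucc)) → c' e = c e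

namespace IsPathReversal

variable {N : ℕ} {p : ℤ} {c c' : V × V → ℤ} {v : Fin (N + 1) → V}

theorem support_subset (h : IsPathReversal p c v c') :
    support c' ⊆ support c ∪ Set.range fun i : Fin N => (v i.succ, v i.castSucc) := by
  intro e he
  rcases edge_trichotomy v e with ⟨i, rfl⟩ | ⟨i, rfl⟩ | hoff
  · exact absurd (h.apply_edge i) he
  · exact Or.inr ⟨i, rfl⟩
  · exact Or.inl (by rwa [mem_support, ← h.apply_of_forall_ne e hoff])

theorem apply_self (h : IsPathReversal p c v c') (hloop : ∀ w, c (w, w) = 0)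
    (hedge : ∀ i : Fin N, 0 < c (v i.castSucc, v i.succ)) (w : V) : c' (w, w) = 0 := by
  have hne : ∀ i : Fin N, v i.castSucc ≠ v i.succ := fun i heq => by
    simpa [heq, hloop] using hedge i
  rw [h.apply_of_forall_ne _ fun i => ⟨fun he => hne i ?_, fun he => hne i ?_⟩, hloop]
  · exact (Prod.mk.inj he).1.symm.trans (Prod.mk.inj he).2
  · exact (Prod.mk.inj he).2.symm.trans (Prod.mk.inj he).1

theorem apply_swap_eq_zero (h : IsPathReversal p c v c')
    (hanti : ∀ a b, 0 < c (a, b) → c (b, a) = 0) {e : V × V} (hpos : 0 < c' e) :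
    c' e.swap = 0 := by
  rcases edge_trichotomy v e with ⟨i, rfl⟩ | ⟨i, rfl⟩ | hoff
  · exact absurd (h.apply_edge i ▸ hpos) (lt_irrefl 0)
  · exact h.apply_edge i
  rcases edge_trichotomy v e.swap with ⟨j, hj⟩ | ⟨j, hj⟩ | hoff'
  · rw [hj]
    exact h.apply_edge j
  · exact absurd (by rw [← Prod.swap_swap e, hj]; rfl) (hoff j).1
  · rw [h.apply_of_forall_ne e hoff] at hpos
    rw [h.apply_of_forall_ne _ hoff']
    exact hanti e.1 e.2 hpos

theorem mem_Icc (h : IsPathReversal p c v c') (hrange : ∀ a b, 0 ≤ c (a, b) ∧ c (a, b) ≤ p - 1)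
    (hedge : ∀ i : Fin N, 0 < c (v i.castSucc, v i.succ)) (e : V × V) :
    0 ≤ c' e ∧ c' e ≤ p - 1 := by
  rcases edge_trichotomy v e with ⟨i, rfl⟩ | ⟨i, rfl⟩ | hoff
  · have := hrange (v i.castSucc) (v i.succ)
    rw [h.apply_edge i]
    omega
  · have := hrange (v i.castSucc) (v i.succ)
    have := hedge i
    rw [h.apply_reverse_edge i]
    omega
  · rw [h.apply_of_forall_ne e hoff]
    exact hrange e.1 e.2

theorem antisymm_eq [DecidableEq V] (h : IsPathReversal p c v c')
    (hanti : ∀ a b, 0 < c (a, b) → c (b, a) = 0)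
    (hedge : ∀ i : Fin N, 0 < c (v i.castSucc, v i.succ))
    (hinj : Injective fun i : Fin N => (v i.castSucc, v i.succ)) (a b : V) :
    c' (a, b) - c' (b, a) =
      c (a, b) - c (b, a) - p * (pathChain v (a, b) - pathChain v (b, a)) := by
  have hne : ∀ i j : Fin N, (v i.succ, v i.castSucc) ≠ (v j.castSucc, v j.succ) := fun i j he => by
    simpa [← he, hanti _ _ (hedge i)] using hedge j
  have hon_edge : ∀ i : Fin N, c' (v i.castSucc, v i.succ) - c' (v i.succ, v i.castSucc) =
      c (v i.castSucc, v i.succ) - c (v i.succ, v i.castSucc) -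
        p * (pathChain v (v i.castSucc, v i.succ) - pathChain v (v i.succ, v i.castSucc)) := by
    intro i
    rw [h.apply_edge, h.apply_reverse_edge, hanti _ _ (hedge i), pathChain_apply_edge hinj,
      pathChain_apply_of_forall_ne (hne i)]
    ring
  rcases edge_trichotomy v (a, b) with ⟨i, hi⟩ | ⟨i, hi⟩ | hoff
  · simp only [Prod.ext_iff] at hi
    rw [hi.1, hi.2]
    exact hon_edge i
  · simp only [Prod.ext_iff] at hi
    rw [hi.1, hi.2]
    linarith [hon_edge i]
  · have hoff' :
        ∀ i : Fin N, (b, a) ≠ (v i.castSucc, v i.succ) ∧ (b, a) ≠ (v i.succ, v i.castSucc) :=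
      fun i => ⟨fun he => (hoff i).2 (by simp_all [Prod.ext_iff]),
        fun he => (hoff i).1 (by simp_all [Prod.ext_iff])⟩
    rw [h.apply_of_forall_ne _ hoff, h.apply_of_forall_ne _ hoff',
      pathChain_apply_of_forall_ne fun i => (hoff i).1,
      pathChain_apply_of_forall_ne fun i => (hoff' i).1]
    ring

theorem antisymm_modEq (h : IsPathReversal p c v c')
    (hanti : ∀ a b, 0 < c (a, b) → c (b, a) = 0)
    (hedge : ∀ i : Fin N, 0 < c (v i.castSucc, v i.succ))
    (hinj : Injective fun i : Fin N => (v i.castSucc, v i.succ)) (a b : V) :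
    c' (a, b) - c' (b, a) ≡ c (a, b) - c (b, a) [ZMOD p] := by
  classical
  rw [h.antisymm_eq hanti hedge hinj, sub_eq_add_neg _ (p * _), ← mul_neg]
  exact Int.modEq_add_fac_self

theorem chainBd_eq [DecidableEq V] (h : IsPathReversal p c v c') (hfin : (support c).Finite)
    (hanti : ∀ a b, 0 < c (a, b) → c (b, a) = 0)
    (hedge : ∀ i : Fin N, 0 < c (v i.castSucc, v i.succ))
    (hinj : Injective fun i : Fin N => (v i.castSucc, v i.succ)) (w : V) :
    chainBd c' w =
      chainBd c w - p * ((if w = v (Fin.last N) then 1 else 0) - (if w = v 0 then 1 else 0)) := by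
  rw [chainBd_eq_sub_mul p hfin (finite_support_pathChain v) (h.antisymm_eq hanti hedge hinj),
    chainBd_pathChain]

end IsPathReversal

theorem abs_sub_le_abs_add_sub_two {x p : ℤ} (hx : 1 ≤ x) (hp : 1 ≤ p) :
    |x - p| ≤ |x| + p - 2 := by
  rw [abs_of_pos (by omega : 0 < x)]
  exact abs_le.2 ⟨by omega, by omega⟩

theorem finsum_abs_le_sub_two [DecidableEq V] {f g : V → ℤ} {p : ℤ} {y z : V} (hp : 1 ≤ p)
    (hf : (support f).Finite) (hfy : 1 ≤ f y) (hfz : f z ≤ -p)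
    (hg : ∀ w, g w = f w - p * ((if w = y then 1 else 0) - (if w = z then 1 else 0))) :
    ∑ᶠ w, |g w| ≤ ∑ᶠ w, |f w| - 2 := by
  have hyz : y ≠ z := by rintro rfl; omega
  set S := hf.toFinset ∪ {y, z}
  have hfS : support (fun w => |f w|) ⊆ S := fun w hw =>
    Finset.mem_union_left _ (hf.mem_toFinset.2 (by simpa using hw))
  have hgS : support (fun w => |g w|) ⊆ S := fun w hw => by
    by_contra hwS
    simp only [S, Finset.coe_union, Finset.coe_insert, Finset.coe_singleton, Set.mem_union,
      Set.mem_insert_iff, Set.mem_singleton_iff, Set.Finite.coe_toFinset, mem_support, not_or,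
      not_not] at hwS
    simp [hg, hwS] at hw
  have hpointwise :
      ∀ w, |g w| ≤ |f w| + ((if w = y then p - 2 else 0) - (if w = z then p else 0)) := by
    intro w
    by_cases hwy : w = y
    · subst hwy
      simpa [hg, hyz, add_sub_assoc] using abs_sub_le_abs_add_sub_two hfy hp
    by_cases hwz : w = z
    · subst hwz
      rw [hg, abs_of_nonpos (by omega : f w ≤ 0), abs_of_nonpos (by simp [hwy]; omega)]
      simp [hwy]
    · simp [hg, hwy, hwz]
  rw [finsum_eq_sum_of_support_subset _ hgS, finsum_eq_sum_of_support_subset _ hfS]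
  calc ∑ w ∈ S, |g w|
      ≤ ∑ w ∈ S, (|f w| + ((if w = y then p - 2 else 0) - (if w = z then p else 0))) :=
        Finset.sum_le_sum fun w _ => hpointwise w
    _ = ∑ w ∈ S, |f w| - 2 := by
        rw [Finset.sum_add_distrib, Finset.sum_sub_distrib, Finset.sum_ite_eq', Finset.sum_ite_eq',
          if_pos (by simp [S]), if_pos (by simp [S])]
        ring

end ChainBoundary

theorem statement1_general {V : Type*} (p : ℤ) (hp : 2 ≤ p) (c : V × V → ℤ)
    (hfin : (Function.support c).Finite)
    (hloop : ∀ v : V, c (v, v) = 0)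
    (hanti : ∀ a b : V, 0 < c (a, b) → c (b, a) = 0)
    (hrange : ∀ a b : V, 0 ≤ c (a, b) ∧ c (a, b) ≤ p - 1)
    (z : V) (hz : chainBd c z ≤ -p)
    (N : ℕ) (v : Fin (N + 1) → V)
    (hv0 : v 0 = z)
    (hedge : ∀ i : Fin N, 0 < c (v i.castSucc, v i.succ))
    (hend : 1 ≤ chainBd c (v (Fin.last N)))
    (hinj : Function.Injective (fun i : Fin N => (v i.castSucc, v i.succ)))
    (c1 : V × V → ℤ)
    (hc1a : ∀ i : Fin N, c1 (v i.castSucc, v i.succ) = 0)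
    (hc1b : ∀ i : Fin N, c1 (v i.succ, v i.castSucc) = p - c (v i.castSucc, v i.succ))
    (hc1c : ∀ e : V × V,
      (∀ i : Fin N, e ≠ (v i.castSucc, v i.succ) ∧ e ≠ (v i.succ, v i.castSucc)) →
      c1 e = c e) :
    ((Function.support c1).Finite ∧
      (∀ w : V, c1 (w, w) = 0) ∧
      (∀ a b : V, 0 < c1 (a, b) → c1 (b, a) = 0) ∧
      (∀ a b : V, 0 ≤ c1 (a, b) ∧ c1 (a, b) ≤ p - 1)) ∧
    (∀ a b : V, c1 (a, b) - c1 (b, a) ≡ c (a, b) - c (b, a) [ZMOD p]) ∧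
    (chainBd c1 z = chainBd c z + p) ∧
    (chainBd c1 (v (Fin.last N)) = chainBd c (v (Fin.last N)) - p ∧
      |chainBd c1 (v (Fin.last N))| ≤ |chainBd c (v (Fin.last N))| + p - 2) ∧
    (∀ w : V, w ≠ z → w ≠ v (Fin.last N) → chainBd c1 w = chainBd c w) ∧
    (∑ᶠ w : V, |chainBd c1 w|) ≤ (∑ᶠ w : V, |chainBd c w|) - 2 := by
  classical
  subst hv0
  have hrev : IsPathReversal p c v c1 := ⟨hc1a, hc1b, hc1c⟩
  have hbd := hrev.chainBd_eq hfin hanti hedge hinj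
  have hends : v 0 ≠ v (Fin.last N) := fun h => by rw [← h] at hend; omega
  have hbd_last : chainBd c1 (v (Fin.last N)) = chainBd c (v (Fin.last N)) - p := by
    simp [hbd, hends.symm]
  refine ⟨⟨(hfin.union (Set.finite_range _)).subset hrev.support_subset,
      hrev.apply_self hloop hedge, fun a b => hrev.apply_swap_eq_zero hanti,
      fun a b => hrev.mem_Icc hrange hedge (a, b)⟩,
    hrev.antisymm_modEq hanti hedge hinj, by simp [hbd, hends],
    ⟨hbd_last, hbd_last ▸ abs_sub_le_abs_add_sub_two hend (by omega)⟩,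
    fun w h0 hlast => by simp [hbd, h0, hlast],
    finsum_abs_le_sub_two (by omega) (finite_support_chainBd hfin) hend hz hbd⟩

/-- The orientation-reversal step along a chain of segments joining a boundary point `z`
of multiplicity `≤ −p` to a boundary point of positive multiplicity: reversing each edge
`(v_{i-1}, v_i)` of the chain and replacing its multiplicity `θ` by `p − θ` preserves the
multiplicity range `{0, …, p−1}` and the class modulo `p`, increases `∂` at `z` by `p`,
decreases `∂` at the endpoint by `p`, leaves `∂` unchanged elsewhere, and decreases
the total boundary mass by at least `2`. -/
theorem statement1 {V : Type*} (p : ℤ) (hp : 2 ≤ p) (c : V × V → ℤ)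
    (hfin : (Function.support c).Finite)
    (hloop : ∀ v : V, c (v, v) = 0)
    (hanti : ∀ a b : V, 0 < c (a, b) → c (b, a) = 0)
    (hrange : ∀ a b : V, 0 ≤ c (a, b) ∧ c (a, b) ≤ p - 1)
    (z : V) (hz : chainBd c z ≤ -p)
    (N : ℕ) (hN : 1 ≤ N) (v : Fin (N + 1) → V)
    (hv0 : v 0 = z)
    (hedge : ∀ i : Fin N, 0 < c (v i.castSucc, v i.succ))
    (hend : 1 ≤ chainBd c (v (Fin.last N)))
    (hinj : Function.Injective (fun i : Fin N => (v i.castSucc, v i.succ)))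
    (c1 : V × V → ℤ)
    (hc1a : ∀ i : Fin N, c1 (v i.castSucc, v i.succ) = 0)
    (hc1b : ∀ i : Fin N, c1 (v i.succ, v i.castSucc) = p - c (v i.castSucc, v i.succ))
    (hc1c : ∀ e : V × V,
      (∀ i : Fin N, e ≠ (v i.castSucc, v i.succ) ∧ e ≠ (v i.succ, v i.castSucc)) →
      c1 e = c e) :
    ((Function.support c1).Finite ∧
      (∀ w : V, c1 (w, w) = 0) ∧
      (∀ a b : V, 0 < c1 (a, b) → c1 (b, a) = 0) ∧
      (∀ a b : V, 0 ≤ c1 (a, b) ∧ c1 (a, b) ≤ p - 1)) ∧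
    (∀ a b : V, c1 (a, b) - c1 (b, a) ≡ c (a, b) - c (b, a) [ZMOD p]) ∧
    (chainBd c1 z = chainBd c z + p) ∧
    (chainBd c1 (v (Fin.last N)) = chainBd c (v (Fin.last N)) - p ∧
      |chainBd c1 (v (Fin.last N))| ≤ |chainBd c (v (Fin.last N))| + p - 2) ∧
    (∀ w : V, w ≠ z → w ≠ v (Fin.last N) → chainBd c1 w = chainBd c w) ∧
    (∑ᶠ w : V, |chainBd c1 w|) ≤ (∑ᶠ w : V, |chainBd c w|) - 2 :=
  statement1_general p hp c hfin hloop hanti hrange z hz N v hv0 hedge hend hinj c1 hc1a hc1b hc1c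
end

section
/- Let p ≥ 2 be an integer, V a type, and c : V × V → ℤ a finitely supported function with loop-free antisymmetric support and 0 ≤ c(a,b) ≤ p − 1 for all a, b. Then there exists a finitely supported c' : V × V → ℤ with loop-free antisymmetric support such that: (1) for every ordered pair (a,b) with c(a,b) > 0, either (c'(a,b) = c(a,b) and c'(b,a) = 0) or (c'(a,b) = 0 and c'(b,a) = p − c(a,b)); (2) c'(a,b) = 0 whenever c(a,b) = 0 and c(b,a) = 0; (3) consequently c'(a,b) − c'(b,a) ≡ c(a,b) − c(b,a) (mod p) for all a, b, and 0 ≤ c'(a,b) ≤ p − 1 for all a, b; and (4) |∂c'(v)| ≤ p − 1 for every v ∈ V. -/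
namespace Statement2Proof

variable {V : Type*}

/-- Admissible reorientations of `c`. -/
def Adm (p : ℤ) (c C : V × V → ℤ) : Prop :=
  (∀ a b : V, c (a, b) = 0 → c (b, a) = 0 → C (a, b) = 0) ∧
  (∀ a b : V, 0 < c (a, b) →
    (C (a, b) = c (a, b) ∧ C (b, a) = 0) ∨ (C (a, b) = 0 ∧ C (b, a) = p - c (a, b)))

/-- Finite-sum boundary relative to a vertex finset. -/
noncomputable def Dd (S : Finset V) (C : V × V → ℤ) (v : V) : ℤ :=
  ∑ u ∈ S, (C (u, v) - C (v, u))

section Ctx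

variable {p : ℤ} {c : V × V → ℤ}
variable (hp : 2 ≤ p) (hloop : ∀ v : V, c (v, v) = 0)
variable (hanti : ∀ a b : V, 0 < c (a, b) → c (b, a) = 0)
variable (hrange : ∀ a b : V, 0 ≤ c (a, b) ∧ c (a, b) ≤ p - 1)

include hanti in
theorem adm_self : Adm p c c :=
  ⟨fun a _ h _ => h, fun a b h => Or.inl ⟨rfl, hanti a b h⟩⟩

include hp hrange in
theorem adm_range {C : V × V → ℤ} (hC : Adm p c C) (a b : V) :
    0 ≤ C (a, b) ∧ C (a, b) ≤ p - 1 := by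
  rcases (hrange a b).1.lt_or_eq with h | h
  · rcases hC.2 a b h with ⟨h1, _⟩ | ⟨h1, _⟩ <;> rw [h1]
    · exact hrange a b
    · omega
  · rcases (hrange b a).1.lt_or_eq with h' | h'
    · rcases hC.2 b a h' with ⟨_, h2⟩ | ⟨_, h2⟩ <;> rw [h2]
      · omega
      · have := (hrange b a).2; omega
    · rw [hC.1 a b h.symm h'.symm]; omega

include hrange in
theorem adm_anti {C : V × V → ℤ} (hC : Adm p c C) (a b : V)
    (h : 0 < C (a, b)) : C (b, a) = 0 := by
  rcases (hrange a b).1.lt_or_eq with hc | hc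
  · rcases hC.2 a b hc with ⟨_, h2⟩ | ⟨h1, _⟩
    · exact h2
    · omega
  · rcases (hrange b a).1.lt_or_eq with hc' | hc'
    · rcases hC.2 b a hc' with ⟨_, h2⟩ | ⟨h1, _⟩
      · omega
      · exact h1
    · have := hC.1 a b hc.symm hc'.symm; omega

include hloop in
theorem adm_loop {C : V × V → ℤ} (hC : Adm p c C) (v : V) : C (v, v) = 0 :=
  hC.1 v v (hloop v) (hloop v)

theorem adm_memS {S : Finset V} (hSdef : ∀ a b : V, c (a, b) ≠ 0 → a ∈ S ∧ b ∈ S)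
    {C : V × V → ℤ} (hC : Adm p c C) (a b : V) (h : C (a, b) ≠ 0) :
    a ∈ S ∧ b ∈ S := by
  by_cases h1 : c (a, b) = 0
  · by_cases h2 : c (b, a) = 0
    · exact absurd (hC.1 a b h1 h2) h
    · exact ⟨(hSdef b a h2).2, (hSdef b a h2).1⟩
  · exact hSdef a b h1

theorem dd_mem {S : Finset V} {C : V × V → ℤ}
    (hCS : ∀ a b : V, C (a, b) ≠ 0 → a ∈ S ∧ b ∈ S) (z : V)
    (h : Dd S C z ≠ 0) : z ∈ S := by
  by_contra hz
  apply h
  refine Finset.sum_eq_zero fun u _ => ?_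
  have h1 : C (u, z) = 0 := by
    by_contra hne; exact hz (hCS u z hne).2
  have h2 : C (z, u) = 0 := by
    by_contra hne; exact hz (hCS z u hne).1
  rw [h1, h2, sub_zero]


theorem pair_ne_of_fst {a b u w : V} (h : a ≠ u) : ((a, b) : V × V) ≠ (u, w) :=
  fun hh => h (by rw [Prod.mk.injEq] at hh; exact hh.1)

theorem pair_ne_of_snd {a b u w : V} (h : b ≠ w) : ((a, b) : V × V) ≠ (u, w) :=
  fun hh => h (by rw [Prod.mk.injEq] at hh; exact hh.2)

open scoped Classical in
/-- Reverse the edge currently oriented `u → w`. -/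
noncomputable def flip (p : ℤ) (C : V × V → ℤ) (u w : V) : V × V → ℤ :=
  fun x => if x = (u, w) then 0 else if x = (w, u) then p - C (u, w) else C x

theorem flip_eq_of_ne {p : ℤ} {C : V × V → ℤ} {u w : V} {x : V × V}
    (h1 : x ≠ (u, w)) (h2 : x ≠ (w, u)) : flip p C u w x = C x := by
  simp [flip, h1, h2]

theorem flip_uw {p : ℤ} {C : V × V → ℤ} {u w : V} : flip p C u w (u, w) = 0 := by
  simp [flip]

theorem flip_wu {p : ℤ} {C : V × V → ℤ} {u w : V} (hne : u ≠ w) :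
    flip p C u w (w, u) = p - C (u, w) := by
  have e : ((w, u) : V × V) ≠ (u, w) := pair_ne_of_fst (Ne.symm hne)
  simp [flip, e]

include hloop in
theorem flip_adm {C : V × V → ℤ} (hC : Adm p c C) {u w : V} (h : 0 < C (u, w)) :
    Adm p c (flip p C u w) := by
  have hne : u ≠ w := by
    rintro rfl
    rw [adm_loop hloop hC u] at h; exact lt_irrefl 0 h
  constructor
  · intro a b h1 h2
    by_cases e1 : ((a, b) : V × V) = (u, w)
    · rw [e1, flip_uw]
    · by_cases e2 : ((a, b) : V × V) = (w, u)
      · exfalso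
        rw [Prod.mk.injEq] at e2
        rw [e2.1, e2.2] at h1 h2
        have := hC.1 u w h2 h1
        omega
      · rw [flip_eq_of_ne e1 e2]; exact hC.1 a b h1 h2
  · intro a b hab
    by_cases e1 : ((a, b) : V × V) = (u, w)
    · rw [Prod.mk.injEq] at e1
      rw [e1.1, e1.2] at hab ⊢
      rcases hC.2 u w hab with ⟨h1, _⟩ | ⟨h1, _⟩
      · right
        refine ⟨flip_uw, ?_⟩
        rw [flip_wu hne, h1]
      · omega
    · by_cases e2 : ((a, b) : V × V) = (w, u)
      · rw [Prod.mk.injEq] at e2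
        rw [e2.1, e2.2] at hab ⊢
        rcases hC.2 w u hab with ⟨_, h2⟩ | ⟨h1, h2⟩
        · omega
        · left
          refine ⟨?_, flip_uw⟩
          rw [flip_wu hne, h2]
          ring
      · have e3 : ((b, a) : V × V) ≠ (u, w) := by
          intro hh
          rw [Prod.mk.injEq] at hh
          exact e2 (by rw [hh.1, hh.2])
        have e4 : ((b, a) : V × V) ≠ (w, u) := by
          intro hh
          rw [Prod.mk.injEq] at hh
          exact e1 (by rw [hh.1, hh.2])
        rw [flip_eq_of_ne e1 e2, flip_eq_of_ne e3 e4]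
        exact hC.2 a b hab

open scoped Classical in
include hloop hrange in
theorem flip_dd {S : Finset V} {C : V × V → ℤ}
    (hCS : ∀ a b : V, C (a, b) ≠ 0 → a ∈ S ∧ b ∈ S)
    (hC : Adm p c C) {u w : V} (h : 0 < C (u, w)) (z : V) :
    Dd S (flip p C u w) z =
      Dd S C z + (if z = u then p else 0) - (if z = w then p else 0) := by
  have hne : u ≠ w := by
    rintro rfl
    rw [adm_loop hloop hC u] at h; exact lt_irrefl 0 h
  have huS : u ∈ S := (hCS u w (by omega)).1
  have hwS : w ∈ S := (hCS u w (by omega)).2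
  have hCwu : C (w, u) = 0 := adm_anti hrange hC u w h
  have hpt : ∀ t ∈ S, flip p C u w (t, z) - flip p C u w (z, t) =
      (C (t, z) - C (z, t)) +
        ((if z = u ∧ t = w then p else 0) - (if z = w ∧ t = u then p else 0)) := by
    intro t _
    by_cases hzu : z = u
    · by_cases htw : t = w
      · rw [hzu, htw, flip_uw, flip_wu hne, hCwu,
          if_pos (⟨rfl, rfl⟩ : (u : V) = u ∧ (w : V) = w),
          if_neg (fun hh : (u : V) = w ∧ (w : V) = u => hne hh.1)]
        ring
      · rw [hzu,
          flip_eq_of_ne (pair_ne_of_snd hne) (pair_ne_of_fst htw),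
          flip_eq_of_ne (pair_ne_of_snd htw) (pair_ne_of_fst hne),
          if_neg (fun hh : (u : V) = u ∧ t = w => htw hh.2),
          if_neg (fun hh : (u : V) = w ∧ t = u => hne hh.1)]
        ring
    · by_cases hzw : z = w
      · by_cases htu : t = u
        · rw [hzw, htu, flip_uw, flip_wu hne, hCwu,
            if_neg (fun hh : (w : V) = u ∧ u = w => hne hh.2),
            if_pos (⟨rfl, rfl⟩ : (w : V) = w ∧ (u : V) = u)]
          ring
        · rw [hzw,
            flip_eq_of_ne (pair_ne_of_fst htu) (pair_ne_of_snd (Ne.symm hne)),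
            flip_eq_of_ne (pair_ne_of_fst (Ne.symm hne)) (pair_ne_of_snd htu),
            if_neg (fun hh : (w : V) = u ∧ t = w => hne hh.1.symm),
            if_neg (fun hh : (w : V) = w ∧ t = u => htu hh.2)]
          ring
      · rw [flip_eq_of_ne (pair_ne_of_snd hzw) (pair_ne_of_snd hzu),
          flip_eq_of_ne (pair_ne_of_fst hzu) (pair_ne_of_fst hzw),
          if_neg (fun hh : z = u ∧ t = w => hzu hh.1),
          if_neg (fun hh : z = w ∧ t = u => hzw hh.1)]
        ring
  have hs1 : (∑ t ∈ S, (if z = u ∧ t = w then (p : ℤ) else 0)) =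
      if z = u then p else 0 := by
    by_cases hzu : z = u
    · simp [hzu, Finset.sum_ite_eq', hwS]
    · simp [hzu]
  have hs2 : (∑ t ∈ S, (if z = w ∧ t = u then (p : ℤ) else 0)) =
      if z = w then p else 0 := by
    by_cases hzw : z = w
    · simp [hzw, Finset.sum_ite_eq', huS]
    · simp [hzw]
  simp only [Dd]
  rw [Finset.sum_congr rfl hpt, Finset.sum_add_distrib, Finset.sum_sub_distrib,
    Finset.sum_sub_distrib, hs1, hs2]
  ring

theorem getLast_suffix' {α : Type*} {l₁ l₂ : List α} (h : l₁ <:+ l₂)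
    (h1 : l₁ ≠ []) (h2 : l₂ ≠ []) : l₂.getLast h2 = l₁.getLast h1 := by
  obtain ⟨t, rfl⟩ := h
  exact List.getLast_append_of_ne_nil _ h1

theorem suffix_chain {α : Type*} {r : α → α → Prop} :
    ∀ (l : List α) (a : α), List.Chain r a l → ∀ b ∈ a :: l,
      ∃ l', List.Chain r b l' ∧ (b :: l') <:+ (a :: l) := by
  intro l
  induction l with
  | nil =>
    intro a _ b hb
    rw [List.mem_singleton] at hb
    subst hb
    exact ⟨[], List.Chain.nil, List.suffix_refl _⟩
  | cons x t ih =>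
    intro a hch b hb
    rcases List.chain_cons.mp hch with ⟨hax, hxt⟩
    rcases List.mem_cons.mp hb with rfl | hb'
    · exact ⟨x :: t, hch, List.suffix_refl _⟩
    · obtain ⟨l', h1, h2⟩ := ih x hxt b hb'
      exact ⟨l', h1, h2.trans (List.suffix_cons a (x :: t))⟩

theorem exists_nodup_chain {α : Type*} {r : α → α → Prop} {a b : α}
    (h : Relation.ReflTransGen r a b) :
    ∃ l, List.Chain r a l ∧ (a :: l).Nodup ∧
      (a :: l).getLast (List.cons_ne_nil _ _) = b := by
  induction h using Relation.ReflTransGen.head_induction_on with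
  | refl => exact ⟨[], List.Chain.nil, List.nodup_singleton _, rfl⟩
  | @head a' c hr hrt ih =>
    obtain ⟨l, hch, hnd, hlast⟩ := ih
    by_cases hmem : a' ∈ c :: l
    · obtain ⟨l', hch', hsuf⟩ := suffix_chain l c hch a' hmem
      refine ⟨l', hch', hsuf.sublist.nodup hnd, ?_⟩
      rw [← getLast_suffix' hsuf (List.cons_ne_nil _ _) (List.cons_ne_nil _ _)]
      exact hlast
    · refine ⟨c :: l, List.chain_cons.mpr ⟨hr, hch⟩,
        List.nodup_cons.mpr ⟨hmem, hnd⟩, ?_⟩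
      rw [List.getLast_cons_cons]
      exact hlast

open scoped Classical in
include hloop hrange in
theorem pathflip {S : Finset V} (hSdef : ∀ a b : V, c (a, b) ≠ 0 → a ∈ S ∧ b ∈ S)
    {C : V × V → ℤ} (hC : Adm p c C) :
    ∀ (l : List V) (w v : V), List.Chain (fun a b => 0 < C (a, b)) w l →
      (w :: l).Nodup → (w :: l).getLast (List.cons_ne_nil _ _) = v →
      ∃ C', Adm p c C' ∧
        (∀ a b : V, a ∉ (w :: l) ∨ b ∉ (w :: l) → C' (a, b) = C (a, b)) ∧
        (∀ z, Dd S C' z =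
          Dd S C z + (if z = w then p else 0) - (if z = v then p else 0)) := by
  intro l
  induction l with
  | nil =>
    intro w v _ _ hlast
    have hwv : w = v := hlast
    refine ⟨C, hC, fun a b _ => rfl, fun z => ?_⟩
    rw [hwv]
    ring
  | cons x t ih =>
    intro w v hch hnd hlast
    rcases List.chain_cons.mp hch with ⟨hwx, hxt⟩
    have hw_notin : w ∉ x :: t := (List.nodup_cons.mp hnd).1
    have hnd' : (x :: t).Nodup := (List.nodup_cons.mp hnd).2
    have hlast' : (x :: t).getLast (List.cons_ne_nil _ _) = v := by
      rw [List.getLast_cons_cons] at hlast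
      exact hlast
    obtain ⟨C₁, hC₁, hinv₁, hD₁⟩ := ih x v hxt hnd' hlast'
    have hwx₁ : C₁ (w, x) = C (w, x) := hinv₁ w x (Or.inl hw_notin)
    have hpos₁ : 0 < C₁ (w, x) := by rw [hwx₁]; exact hwx
    have hCS₁ : ∀ a b : V, C₁ (a, b) ≠ 0 → a ∈ S ∧ b ∈ S :=
      adm_memS hSdef hC₁
    refine ⟨flip p C₁ w x, flip_adm hloop hC₁ hpos₁, ?_, ?_⟩
    · intro a b hab
      have ha' : a ∉ x :: t ∨ b ∉ x :: t := by
        rcases hab with h | h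
        · exact Or.inl (fun hh => h (List.mem_cons_of_mem _ hh))
        · exact Or.inr (fun hh => h (List.mem_cons_of_mem _ hh))
      have e1 : ((a, b) : V × V) ≠ (w, x) := by
        intro hh
        rw [Prod.mk.injEq] at hh
        rcases hab with h | h
        · exact h (hh.1 ▸ List.mem_cons_self)
        · exact h (hh.2 ▸ List.mem_cons_of_mem _ (List.mem_cons_self))
      have e2 : ((a, b) : V × V) ≠ (x, w) := by
        intro hh
        rw [Prod.mk.injEq] at hh
        rcases hab with h | h
        · exact h (hh.1 ▸ List.mem_cons_of_mem _ (List.mem_cons_self))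
        · exact h (hh.2 ▸ List.mem_cons_self)
      rw [flip_eq_of_ne e1 e2, hinv₁ a b ha']
    · intro z
      rw [flip_dd hloop hrange hCS₁ hC₁ hpos₁ z, hD₁ z]
      ring

include hp hrange in
theorem exists_neg_of_big {S : Finset V} (hSdef : ∀ a b : V, c (a, b) ≠ 0 → a ∈ S ∧ b ∈ S)
    {C : V × V → ℤ} (hC : Adm p c C) {v : V} (hv : p ≤ Dd S C v) :
    ∃ w, Relation.ReflTransGen (fun a b => 0 < C (a, b)) w v ∧ Dd S C w ≤ -1 := by
  classical
  have hCS : ∀ a b : V, C (a, b) ≠ 0 → a ∈ S ∧ b ∈ S := adm_memS hSdef hC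
  have hCrange : ∀ a b : V, 0 ≤ C (a, b) := fun a b => (adm_range hp hrange hC a b).1
  have hvS : v ∈ S := dd_mem hCS v (by omega)
  set r := fun a b : V => 0 < C (a, b) with hr
  set R := S.filter (fun w => Relation.ReflTransGen r w v) with hR
  have hvR : v ∈ R := Finset.mem_filter.mpr ⟨hvS, Relation.ReflTransGen.refl⟩
  have hRS : R ⊆ S := Finset.filter_subset _ _
  have hsum : ∑ w ∈ R, Dd S C w ≤ 0 := by
    have hsplit : ∀ w ∈ R, Dd S C w =
        (∑ u ∈ S \ R, (C (u, w) - C (w, u))) + ∑ u ∈ R, (C (u, w) - C (w, u)) := by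
      intro w _
      rw [Dd, ← Finset.sum_sdiff hRS]
    rw [Finset.sum_congr rfl hsplit, Finset.sum_add_distrib]
    have h1 : ∑ w ∈ R, ∑ u ∈ R, (C (u, w) - C (w, u)) = 0 := by
      have := Finset.sum_comm (s := R) (t := R) (f := fun w u => C (u, w))
      simp only [Finset.sum_sub_distrib]
      omega
    have h2 : ∑ w ∈ R, ∑ u ∈ S \ R, (C (u, w) - C (w, u)) ≤ 0 := by
      apply Finset.sum_nonpos
      intro w hw
      apply Finset.sum_nonpos
      intro u hu
      rw [Finset.mem_sdiff] at hu
      have hCuw : C (u, w) = 0 := by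
        by_contra hne
        have hpos : 0 < C (u, w) := lt_of_le_of_ne (hCrange u w) (Ne.symm hne)
        have hreach : Relation.ReflTransGen r u v :=
          Relation.ReflTransGen.head hpos (Finset.mem_filter.mp hw).2
        exact hu.2 (Finset.mem_filter.mpr ⟨(hCS u w hne).1, hreach⟩)
      rw [hCuw]
      have := hCrange w u
      omega
    omega
  by_contra hcon
  push_neg at hcon
  have hnonneg : ∀ w ∈ R, 0 ≤ Dd S C w := by
    intro w hw
    have := hcon w (Finset.mem_filter.mp hw).2
    omega
  have := Finset.single_le_sum hnonneg hvR
  omega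

include hp hrange in
theorem exists_pos_of_small {S : Finset V} (hSdef : ∀ a b : V, c (a, b) ≠ 0 → a ∈ S ∧ b ∈ S)
    {C : V × V → ℤ} (hC : Adm p c C) {v : V} (hv : Dd S C v ≤ -p) :
    ∃ w, Relation.ReflTransGen (fun a b => 0 < C (a, b)) v w ∧ 1 ≤ Dd S C w := by
  classical
  have hCS : ∀ a b : V, C (a, b) ≠ 0 → a ∈ S ∧ b ∈ S := adm_memS hSdef hC
  have hCrange : ∀ a b : V, 0 ≤ C (a, b) := fun a b => (adm_range hp hrange hC a b).1
  have hvS : v ∈ S := dd_mem hCS v (by omega)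
  set r := fun a b : V => 0 < C (a, b) with hr
  set R := S.filter (fun w => Relation.ReflTransGen r v w) with hR
  have hvR : v ∈ R := Finset.mem_filter.mpr ⟨hvS, Relation.ReflTransGen.refl⟩
  have hRS : R ⊆ S := Finset.filter_subset _ _
  have hsum : 0 ≤ ∑ w ∈ R, Dd S C w := by
    have hsplit : ∀ w ∈ R, Dd S C w =
        (∑ u ∈ S \ R, (C (u, w) - C (w, u))) + ∑ u ∈ R, (C (u, w) - C (w, u)) := by
      intro w _
      rw [Dd, ← Finset.sum_sdiff hRS]
    rw [Finset.sum_congr rfl hsplit, Finset.sum_add_distrib]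
    have h1 : ∑ w ∈ R, ∑ u ∈ R, (C (u, w) - C (w, u)) = 0 := by
      have := Finset.sum_comm (s := R) (t := R) (f := fun w u => C (u, w))
      simp only [Finset.sum_sub_distrib]
      omega
    have h2 : 0 ≤ ∑ w ∈ R, ∑ u ∈ S \ R, (C (u, w) - C (w, u)) := by
      apply Finset.sum_nonneg
      intro w hw
      apply Finset.sum_nonneg
      intro u hu
      rw [Finset.mem_sdiff] at hu
      have hCwu : C (w, u) = 0 := by
        by_contra hne
        have hpos : 0 < C (w, u) := lt_of_le_of_ne (hCrange w u) (Ne.symm hne)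
        have hreach : Relation.ReflTransGen r v u :=
          Relation.ReflTransGen.tail (Finset.mem_filter.mp hw).2 hpos
        exact hu.2 (Finset.mem_filter.mpr ⟨(hCS w u hne).2, hreach⟩)
      rw [hCwu]
      have := hCrange u w
      omega
    omega
  by_contra hcon
  push_neg at hcon
  have hnonpos : ∀ w ∈ R.erase v, Dd S C w ≤ 0 := by
    intro w hw
    have := hcon w (Finset.mem_filter.mp (Finset.mem_of_mem_erase hw)).2
    omega
  have herase := Finset.add_sum_erase R (Dd S C) hvR
  have hle : ∑ w ∈ R.erase v, Dd S C w ≤ 0 := Finset.sum_nonpos hnonpos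
  omega

include hp hloop hrange in
theorem decrease {S : Finset V} (hSdef : ∀ a b : V, c (a, b) ≠ 0 → a ∈ S ∧ b ∈ S)
    {C : V × V → ℤ} (hC : Adm p c C) {v : V} (hv : p ≤ |Dd S C v|) :
    ∃ C', Adm p c C' ∧
      ∑ z ∈ S, (Dd S C' z) ^ 2 < ∑ z ∈ S, (Dd S C z) ^ 2 := by
  classical
  have hCS : ∀ a b : V, C (a, b) ≠ 0 → a ∈ S ∧ b ∈ S := adm_memS hSdef hC
  rcases le_abs.mp hv with h1 | h1
  · -- Dd S C v ≥ p
    obtain ⟨w, hreach, hw⟩ := exists_neg_of_big hp hrange hSdef hC h1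
    obtain ⟨l, hch, hnd, hlast⟩ := exists_nodup_chain hreach
    obtain ⟨C', hC', _, hD⟩ := pathflip hloop hrange hSdef hC l w v hch hnd hlast
    have hwv : w ≠ v := by intro hh; rw [hh] at hw; omega
    have hwS : w ∈ S := dd_mem hCS w (by omega)
    have hvS : v ∈ S := dd_mem hCS v (by omega)
    have hDw : Dd S C' w = Dd S C w + p := by
      rw [hD w, if_pos rfl, if_neg hwv]; ring
    have hDv : Dd S C' v = Dd S C v - p := by
      rw [hD v, if_neg (Ne.symm hwv), if_pos rfl]; ring
    refine ⟨C', hC', ?_⟩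
    have hsub : ({w, v} : Finset V) ⊆ S := by
      intro z hz
      rw [Finset.mem_insert, Finset.mem_singleton] at hz
      rcases hz with rfl | rfl
      · exact hwS
      · exact hvS
    have key : ∑ z ∈ S, ((Dd S C' z) ^ 2 - (Dd S C z) ^ 2) =
        ((Dd S C w + p) ^ 2 - (Dd S C w) ^ 2) +
          ((Dd S C v - p) ^ 2 - (Dd S C v) ^ 2) := by
      rw [← Finset.sum_subset hsub (fun z hz hnz => ?_)]
      · rw [Finset.sum_pair hwv, hDw, hDv]
      · rw [Finset.mem_insert, Finset.mem_singleton] at hnz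
        push_neg at hnz
        rw [hD z, if_neg hnz.1, if_neg hnz.2]
        ring
    have hdiff : ∑ z ∈ S, (Dd S C' z) ^ 2 - ∑ z ∈ S, (Dd S C z) ^ 2 =
        ((Dd S C w + p) ^ 2 - (Dd S C w) ^ 2) +
          ((Dd S C v - p) ^ 2 - (Dd S C v) ^ 2) := by
      rw [← Finset.sum_sub_distrib, key]
    nlinarith [hdiff, hw, h1, hp]
  · -- Dd S C v ≤ -p
    have h1' : Dd S C v ≤ -p := by omega
    obtain ⟨w, hreach, hw⟩ := exists_pos_of_small hp hrange hSdef hC h1'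
    obtain ⟨l, hch, hnd, hlast⟩ := exists_nodup_chain hreach
    obtain ⟨C', hC', _, hD⟩ := pathflip hloop hrange hSdef hC l v w hch hnd hlast
    have hwv : w ≠ v := by intro hh; rw [hh] at hw; omega
    have hwS : w ∈ S := dd_mem hCS w (by omega)
    have hvS : v ∈ S := dd_mem hCS v (by omega)
    have hDw : Dd S C' w = Dd S C w - p := by
      rw [hD w, if_neg hwv, if_pos rfl]; ring
    have hDv : Dd S C' v = Dd S C v + p := by
      rw [hD v, if_pos rfl, if_neg (Ne.symm hwv)]; ring
    refine ⟨C', hC', ?_⟩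
    have hsub : ({w, v} : Finset V) ⊆ S := by
      intro z hz
      rw [Finset.mem_insert, Finset.mem_singleton] at hz
      rcases hz with rfl | rfl
      · exact hwS
      · exact hvS
    have key : ∑ z ∈ S, ((Dd S C' z) ^ 2 - (Dd S C z) ^ 2) =
        ((Dd S C w - p) ^ 2 - (Dd S C w) ^ 2) +
          ((Dd S C v + p) ^ 2 - (Dd S C v) ^ 2) := by
      rw [← Finset.sum_subset hsub (fun z hz hnz => ?_)]
      · rw [Finset.sum_pair hwv, hDw, hDv]
      · rw [Finset.mem_insert, Finset.mem_singleton] at hnz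
        push_neg at hnz
        rw [hD z, if_neg hnz.2, if_neg hnz.1]
        ring
    have hdiff : ∑ z ∈ S, (Dd S C' z) ^ 2 - ∑ z ∈ S, (Dd S C z) ^ 2 =
        ((Dd S C w - p) ^ 2 - (Dd S C w) ^ 2) +
          ((Dd S C v + p) ^ 2 - (Dd S C v) ^ 2) := by
      rw [← Finset.sum_sub_distrib, key]
    nlinarith [hdiff, hw, h1', hp]

include hp hloop hanti hrange in
theorem exists_good {S : Finset V} (hSdef : ∀ a b : V, c (a, b) ≠ 0 → a ∈ S ∧ b ∈ S) :
    ∃ C, Adm p c C ∧ ∀ v : V, |Dd S C v| ≤ p - 1 := by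
  classical
  have key : ∀ n : ℕ, ∀ C, Adm p c C → (∑ z ∈ S, (Dd S C z) ^ 2).toNat ≤ n →
      ∃ C', Adm p c C' ∧ ∀ v : V, |Dd S C' v| ≤ p - 1 := by
    intro n
    induction n with
    | zero =>
      intro C hC hle
      by_cases hgood : ∀ v : V, |Dd S C v| ≤ p - 1
      · exact ⟨C, hC, hgood⟩
      · push_neg at hgood
        obtain ⟨v, hv⟩ := hgood
        have hv' : p ≤ |Dd S C v| := by
          have := abs_nonneg (Dd S C v); omega
        obtain ⟨C', _, hlt⟩ := decrease hp hloop hrange hSdef hC hv'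
        have h0 : (0 : ℤ) ≤ ∑ z ∈ S, (Dd S C' z) ^ 2 :=
          Finset.sum_nonneg fun z _ => sq_nonneg _
        omega
    | succ n ih =>
      intro C hC hle
      by_cases hgood : ∀ v : V, |Dd S C v| ≤ p - 1
      · exact ⟨C, hC, hgood⟩
      · push_neg at hgood
        obtain ⟨v, hv⟩ := hgood
        have hv' : p ≤ |Dd S C v| := by
          have := abs_nonneg (Dd S C v); omega
        obtain ⟨C', hC', hlt⟩ := decrease hp hloop hrange hSdef hC hv'
        have h0 : (0 : ℤ) ≤ ∑ z ∈ S, (Dd S C' z) ^ 2 :=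
          Finset.sum_nonneg fun z _ => sq_nonneg _
        exact ih C' hC' (by omega)
  exact key (∑ z ∈ S, (Dd S c z) ^ 2).toNat c (adm_self hanti) le_rfl

end Ctx

end Statement2Proof

/-- Any finitely supported 1-chain with loop-free antisymmetric support and multiplicities
in `{0, …, p−1}` can be reoriented edge by edge (replacing an oriented edge of multiplicity
`θ > 0` by the reversed edge with multiplicity `p − θ`) so as to obtain a chain of the same
class modulo `p` whose boundary multiplicities all lie in `{−(p−1), …, p−1}`. -/
theorem statement2 {V : Type*} (p : ℤ) (hp : 2 ≤ p) (c : V × V → ℤ)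
    (hfin : (Function.support c).Finite)
    (hloop : ∀ v : V, c (v, v) = 0)
    (hanti : ∀ a b : V, 0 < c (a, b) → c (b, a) = 0)
    (hrange : ∀ a b : V, 0 ≤ c (a, b) ∧ c (a, b) ≤ p - 1) :
    ∃ c' : V × V → ℤ,
      (Function.support c').Finite ∧
      (∀ v : V, c' (v, v) = 0) ∧
      (∀ a b : V, 0 < c' (a, b) → c' (b, a) = 0) ∧
      (∀ a b : V, 0 < c (a, b) →
        (c' (a, b) = c (a, b) ∧ c' (b, a) = 0) ∨
        (c' (a, b) = 0 ∧ c' (b, a) = p - c (a, b))) ∧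
      (∀ a b : V, c (a, b) = 0 → c (b, a) = 0 → c' (a, b) = 0) ∧
      (∀ a b : V, c' (a, b) - c' (b, a) ≡ c (a, b) - c (b, a) [ZMOD p]) ∧
      (∀ a b : V, 0 ≤ c' (a, b) ∧ c' (a, b) ≤ p - 1) ∧
      (∀ v : V, |chainBd c' v| ≤ p - 1) := by
  classical
  open Statement2Proof in
  set S : Finset V := hfin.toFinset.image Prod.fst ∪ hfin.toFinset.image Prod.snd
    with hSdefn
  have hSdef : ∀ a b : V, c (a, b) ≠ 0 → a ∈ S ∧ b ∈ S := by
    intro a b h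
    have hmem : (a, b) ∈ hfin.toFinset := (Set.Finite.mem_toFinset hfin).mpr h
    constructor
    · exact Finset.mem_union_left _ (Finset.mem_image.mpr ⟨(a, b), hmem, rfl⟩)
    · exact Finset.mem_union_right _ (Finset.mem_image.mpr ⟨(a, b), hmem, rfl⟩)
  obtain ⟨C, hC, hgood⟩ :=
    Statement2Proof.exists_good hp hloop hanti hrange hSdef
  have hCS : ∀ a b : V, C (a, b) ≠ 0 → a ∈ S ∧ b ∈ S :=
    Statement2Proof.adm_memS hSdef hC
  refine ⟨C, ?_, ?_, ?_, hC.2, hC.1, ?_, ?_, ?_⟩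
  · -- finite support
    apply Set.Finite.subset (hfin.union (hfin.preimage Prod.swap_injective.injOn))
    rintro ⟨a, b⟩ hx
    have hx' : C (a, b) ≠ 0 := hx
    by_cases h1 : c (a, b) = 0
    · by_cases h2 : c (b, a) = 0
      · exact absurd (hC.1 a b h1 h2) hx'
      · exact Or.inr h2
    · exact Or.inl h1
  · exact Statement2Proof.adm_loop hloop hC
  · exact Statement2Proof.adm_anti hrange hC
  · -- mod p
    intro a b
    apply Int.modEq_iff_dvd.mpr
    rcases (hrange a b).1.lt_or_eq with h | h
    · have h3 : c (b, a) = 0 := hanti a b h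
      rcases hC.2 a b h with ⟨h1, h2⟩ | ⟨h1, h2⟩
      · exact ⟨0, by rw [h1, h2, h3]; ring⟩
      · exact ⟨1, by rw [h1, h2, h3]; ring⟩
    · rcases (hrange b a).1.lt_or_eq with h' | h'
      · have h3 : c (a, b) = 0 := hanti b a h'
        rcases hC.2 b a h' with ⟨h1, h2⟩ | ⟨h1, h2⟩
        · exact ⟨0, by rw [h1, h2, h3]; ring⟩
        · exact ⟨-1, by rw [h1, h2, h3]; ring⟩
      · have h1 : C (a, b) = 0 := hC.1 a b h.symm h'.symm
        have h2 : C (b, a) = 0 := hC.1 b a h'.symm h.symm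
        exact ⟨0, by rw [h1, h2, ← h, ← h']; ring⟩
  · exact Statement2Proof.adm_range hp hrange hC
  · intro v
    have hbd : chainBd C v = Statement2Proof.Dd S C v := by
      rw [chainBd]
      apply finsum_eq_sum_of_support_subset
      intro u hu
      rw [Function.mem_support] at hu
      have : C (u, v) ≠ 0 ∨ C (v, u) ≠ 0 := by
        by_contra hcon
        push_neg at hcon
        rw [hcon.1, hcon.2] at hu
        exact hu (sub_self 0)
      rcases this with h | h
      · exact (hCS u v h).1
      · exact (hCS v u h).2
    rw [hbd]
    exact hgood v
end

section
/- Let p ≥ 2 and n ≥ 1 be integers, and let c : ℝⁿ × ℝⁿ → ℤ be a finitely supported function with loop-free antisymmetric support and 0 ≤ c(a,b) ≤ p − 1 for all a, b ∈ ℝⁿ. Then there exists a finitely supported c' : ℝⁿ × ℝⁿ → ℤ with loop-free antisymmetric support such that: (1) for every ordered pair (a,b) with c(a,b) > 0, either (c'(a,b) = c(a,b) and c'(b,a) = 0) or (c'(a,b) = 0 and c'(b,a) = p − c(a,b)), and c'(a,b) = 0 whenever c(a,b) = 0 and c(b,a) = 0; (2) the mass satisfies Σ_{a,b} |c'(a,b)|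 · ‖a − b‖ ≤ (p − 1) · Σ_{(a,b) : c(a,b) > 0} min(c(a,b), p − c(a,b)) · ‖a − b‖; and (3) for every finitely supported r : ℝⁿ → ℤ with r(v) ≡ ∂c(v) (mod p) for all v, one has Σ_v |∂c'(v)| ≤ (p − 1) · Σ_v |r(v)|. -/
set_option linter.unusedSectionVars false

namespace Stmt3

variable {V : Type*} [DecidableEq V]

lemma chainBd_eq_sum (f : V × V → ℤ) (U : Finset V)
    (hU : ∀ e : V × V, f e ≠ 0 → e.1 ∈ U ∧ e.2 ∈ U) (v : V) :
    chainBd f v = ∑ u ∈ U, (f (u, v) - f (v, u)) := by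
  apply finsum_eq_sum_of_support_subset
  intro u hu
  simp only [Function.mem_support] at hu
  by_contra hmem
  have h1 : f (u, v) = 0 := by
    by_contra hx; exact hmem ((hU _ hx).1)
  have h2 : f (v, u) = 0 := by
    by_contra hx; exact hmem ((hU _ hx).2)
  simp [h1, h2] at hu

lemma chainBd_zero (v : V) : chainBd (0 : V × V → ℤ) v = 0 := by
  simp [chainBd]

lemma chainBd_add (f g : V × V → ℤ) (U : Finset V)
    (hf : ∀ e : V × V, f e ≠ 0 → e.1 ∈ U ∧ e.2 ∈ U)
    (hg : ∀ e : V × V, g e ≠ 0 → e.1 ∈ U ∧ e.2 ∈ U) (v : V) :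
    chainBd (f + g) v = chainBd f v + chainBd g v := by
  have hfg : ∀ e : V × V, (f + g) e ≠ 0 → e.1 ∈ U ∧ e.2 ∈ U := by
    intro e he
    by_cases h1 : f e = 0
    · exact hg e (by simpa [Pi.add_apply, h1] using he)
    · exact hf e h1
  rw [chainBd_eq_sum (f + g) U hfg, chainBd_eq_sum f U hf, chainBd_eq_sum g U hg,
    ← Finset.sum_add_distrib]
  refine Finset.sum_congr rfl fun u _ => ?_
  simp only [Pi.add_apply]; ring

lemma chainBd_indicator {a b : V} (hab : a ≠ b) (k : ℤ) (v : V) :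
    chainBd (fun e => if e = (a, b) then k else 0) v
      = (if v = b then k else 0) - (if v = a then k else 0) := by
  classical
  rw [chainBd_eq_sum _ {a, b} (by
    intro e he
    have : e = (a, b) := by by_contra hx; simp [hx] at he
    subst this; simp)]
  rw [Finset.sum_pair hab]
  by_cases hva : v = a <;> by_cases hvb : v = b
  · exact absurd (hva ▸ hvb) hab
  · subst hva
    simp [Prod.ext_iff, hab, Ne.symm hab, hvb]
  · subst hvb
    simp [Prod.ext_iff, hab, Ne.symm hab, hva]
  · simp [Prod.ext_iff, hva, hvb]

section Walks

open SimpleGraph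

variable {G : SimpleGraph V} (σ : V → V → V × V → ℤ)

def wchain : {a b : V} → G.Walk a b → (V × V → ℤ)
  | _, _, SimpleGraph.Walk.nil => 0
  | _, _, SimpleGraph.Walk.cons (u := x) (v := y) _ q => σ x y + wchain q

variable {Fr : V × V → Prop}
variable (hσ : ∀ x y, G.Adj x y → ∀ e, σ x y e ≠ 0 →
    Fr e ∧ (σ x y e = 1 ∨ σ x y e = -1) ∧ s(e.1, e.2) = s(x, y))

include hσ in
lemma wchain_supp : ∀ {a b : V} (w : G.Walk a b) (e : V × V), wchain σ w e ≠ 0 →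
    Fr e ∧ s(e.1, e.2) ∈ w.edges := by
  intro a b w
  induction w with
  | nil => intro e he; simp [wchain] at he
  | @cons x y z hadj q ih =>
    intro e he
    rw [wchain] at he
    by_cases h1 : σ x y e = 0
    · have := ih e (by simpa [h1] using he)
      exact ⟨this.1, by simp [Walk.edges_cons, this.2]⟩
    · obtain ⟨hFr, _, hs⟩ := hσ x y hadj e h1
      exact ⟨hFr, by simp [Walk.edges_cons, hs]⟩

include hσ in
lemma wchain_val : ∀ {a b : V} (w : G.Walk a b), w.edges.Nodup →
    ∀ e : V × V, wchain σ w e ≠ 0 → wchain σ w e = 1 ∨ wchain σ w e = -1 := by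
  intro a b w
  induction w with
  | nil => intro _ e he; simp [wchain] at he
  | @cons x y z hadj q ih =>
    intro hnd e he
    rw [Walk.edges_cons, List.nodup_cons] at hnd
    rw [wchain, Pi.add_apply] at he ⊢
    by_cases h1 : σ x y e = 0
    · rw [h1, zero_add] at he ⊢
      exact ih hnd.2 e he
    · obtain ⟨hFr, hval, hs⟩ := hσ x y hadj e h1
      have hq : wchain σ q e = 0 := by
        by_contra hx
        exact hnd.1 (hs ▸ (wchain_supp σ hσ q e hx).2)
      rw [hq, add_zero]
      exact hval

include hσ in
lemma wchain_ne_zero {a x b : V} (hadj : G.Adj a x) (q : G.Walk x b)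
    (hnd : (Walk.cons hadj q).edges.Nodup)
    (hne : ∀ x y, G.Adj x y → ∃ e, σ x y e ≠ 0) :
    ∃ e, wchain σ (Walk.cons hadj q) e ≠ 0 := by
  obtain ⟨e, he⟩ := hne a x hadj
  refine ⟨e, ?_⟩
  rw [Walk.edges_cons, List.nodup_cons] at hnd
  obtain ⟨hFr, hval, hs⟩ := hσ _ _ hadj e he
  have hq : wchain σ q e = 0 := by
    by_contra hx
    exact hnd.1 (hs ▸ (wchain_supp σ hσ q e hx).2)
  rw [wchain, Pi.add_apply, hq, add_zero]
  exact he

lemma wchain_suppU (U : Finset V)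
    (hσU : ∀ x y, G.Adj x y → ∀ e : V × V, σ x y e ≠ 0 → e.1 ∈ U ∧ e.2 ∈ U) :
    ∀ {a b : V} (w : G.Walk a b) (e : V × V), wchain σ w e ≠ 0 → e.1 ∈ U ∧ e.2 ∈ U := by
  intro a b w
  induction w with
  | nil => intro e he; simp [wchain] at he
  | @cons x y z hadj q ih =>
    intro e he
    rw [wchain] at he
    by_cases h1 : σ x y e = 0
    · exact ih e (by simpa [h1] using he)
    · exact hσU x y hadj e h1

lemma wchain_bd (U : Finset V)
    (hσU : ∀ x y, G.Adj x y → ∀ e : V × V, σ x y e ≠ 0 → e.1 ∈ U ∧ e.2 ∈ U)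
    (hσbd : ∀ x y, G.Adj x y → ∀ v : V,
      chainBd (σ x y) v = (if v = y then 1 else 0) - (if v = x then 1 else 0)) :
    ∀ {a b : V} (w : G.Walk a b) (v : V),
      chainBd (wchain σ w) v = (if v = b then 1 else 0) - (if v = a then 1 else 0) := by
  intro a b w
  induction w with
  | nil => intro v; simp [wchain, chainBd_zero]
  | @cons x y z hadj q ih =>
    intro v
    rw [wchain, chainBd_add (σ x y) (wchain σ q) U (hσU x y hadj) (wchain_suppU σ U hσU q),
      hσbd x y hadj v, ih v]
    ring

end Walks


section Push

open SimpleGraph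

variable (p : ℤ) (E : Finset (V × V)) (h : V × V → ℤ)

/-- "fractional" edges. -/
def Frp (e : V × V) : Prop := e ∈ E ∧ 0 < h e ∧ h e < p

instance : DecidablePred (Frp p E h) := fun e => by unfold Frp; infer_instance

/-- the graph of fractional edges. -/
def Gp : SimpleGraph V := SimpleGraph.fromRel (fun x y => Frp p E h (x, y))

lemma Gp_adj {x y : V} : (Gp p E h).Adj x y ↔ x ≠ y ∧ (Frp p E h (x, y) ∨ Frp p E h (y, x)) :=
  SimpleGraph.fromRel_adj _ x y

/-- the elementary chain associated to a fractional edge. -/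
def sg (x y : V) : V × V → ℤ :=
  if Frp p E h (x, y) then (fun e => if e = (x, y) then 1 else 0)
  else (fun e => if e = (y, x) then (-1 : ℤ) else 0)

lemma sg_spec : ∀ x y, (Gp p E h).Adj x y → ∀ e, sg p E h x y e ≠ 0 →
    Frp p E h e ∧ (sg p E h x y e = 1 ∨ sg p E h x y e = -1) ∧ s(e.1, e.2) = s(x, y) := by
  intro x y hadj e he
  rw [Gp_adj] at hadj
  unfold sg at he ⊢
  by_cases hf : Frp p E h (x, y)
  · rw [if_pos hf] at he ⊢
    have : e = (x, y) := by by_contra hx; simp [hx] at he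
    subst this; simp [hf]
  · rw [if_neg hf] at he ⊢
    have hf2 : Frp p E h (y, x) := (hadj.2).resolve_left hf
    have : e = (y, x) := by by_contra hx; simp [hx] at he
    subst this
    simp [hf2, Sym2.eq_swap]

lemma sg_bd : ∀ x y, (Gp p E h).Adj x y → ∀ v : V,
    chainBd (sg p E h x y) v = (if v = y then 1 else 0) - (if v = x then 1 else 0) := by
  intro x y hadj v
  have hxy : x ≠ y := hadj.ne
  unfold sg
  by_cases hf : Frp p E h (x, y)
  · rw [if_pos hf, chainBd_indicator hxy]
  · rw [if_neg hf, chainBd_indicator (Ne.symm hxy)]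
    split_ifs <;> ring

lemma sg_ne : ∀ x y, (Gp p E h).Adj x y → ∃ e, sg p E h x y e ≠ 0 := by
  intro x y _
  unfold sg
  by_cases hf : Frp p E h (x, y)
  · exact ⟨(x, y), by simp [hf]⟩
  · exact ⟨(y, x), by simp [hf]⟩

/-- the vertex set of `E`. -/
def VS : Finset V := E.image Prod.fst ∪ E.image Prod.snd

lemma mem_VS_of_mem_E {e : V × V} (he : e ∈ E) : e.1 ∈ VS E ∧ e.2 ∈ VS E := by
  constructor
  · exact Finset.mem_union_left _ (Finset.mem_image_of_mem _ he)
  · exact Finset.mem_union_right _ (Finset.mem_image_of_mem _ he)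

lemma sg_suppU : ∀ x y, (Gp p E h).Adj x y → ∀ e : V × V, sg p E h x y e ≠ 0 →
    e.1 ∈ VS E ∧ e.2 ∈ VS E := fun x y hadj e he =>
  mem_VS_of_mem_E E (sg_spec p E h x y hadj e he).1.1

variable {p E h}

/-- at a vertex all of whose incident fractional edges go to a single
neighbour, the boundary of `h` is not divisible by `p`. -/
lemma no_dvd_bd (hp : 0 < p)
    (Hanti : ∀ a b : V, (a, b) ∈ E → (b, a) ∉ E)
    (hsupp : ∀ e, h e ≠ 0 → e ∈ E) (hrange : ∀ e, 0 ≤ h e ∧ h e ≤ p)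
    (v : V) (u₀ : V) (hadj : (Gp p E h).Adj v u₀)
    (huniq : ∀ u, (Gp p E h).Adj v u → u = u₀) :
    ¬ p ∣ chainBd h v := by
  have hU : ∀ e : V × V, h e ≠ 0 → e.1 ∈ VS E ∪ {u₀} ∧ e.2 ∈ VS E ∪ {u₀} := by
    intro e he
    have := mem_VS_of_mem_E E (hsupp e he)
    exact ⟨Finset.mem_union_left _ this.1, Finset.mem_union_left _ this.2⟩
  rw [chainBd_eq_sum h (VS E ∪ {u₀}) hU v]
  have hu₀mem : u₀ ∈ VS E ∪ {u₀} := Finset.mem_union_right _ (Finset.mem_singleton_self _)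
  rw [← Finset.add_sum_erase _ _ hu₀mem]
  -- each term over the erased set is divisible by p
  have hdvd : ∀ u ∈ (VS E ∪ {u₀}).erase u₀, p ∣ (h (u, v) - h (v, u)) := by
    intro u hu
    have hune : u ≠ u₀ := Finset.ne_of_mem_erase hu
    have key : ∀ e : V × V, (e = (u, v) ∨ e = (v, u)) → p ∣ h e := by
      intro e hecase
      by_cases h0 : h e = 0
      · simp [h0]
      have heE : e ∈ E := hsupp e h0
      by_cases hfr : 0 < h e ∧ h e < p
      · exfalso
        have hFr : Frp p E h e := ⟨heE, hfr⟩
        have : (Gp p E h).Adj v u := by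
          rw [Gp_adj]
          rcases hecase with rfl | rfl
          · refine ⟨?_, Or.inr hFr⟩
            rintro rfl; exact Hanti _ _ heE heE
          · refine ⟨?_, Or.inl hFr⟩
            rintro rfl; exact Hanti _ _ heE heE
        exact hune (huniq u this)
      · have h1 := (hrange e).1
        have h2 := (hrange e).2
        have : h e = p := by omega
        simp [this]
    exact dvd_sub (key _ (Or.inl rfl)) (key _ (Or.inr rfl))
  intro hdvdall
  have hdvdsum : p ∣ ∑ u ∈ (VS E ∪ {u₀}).erase u₀, (h (u, v) - h (v, u)) :=
    Finset.dvd_sum hdvd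
  have hdvd0 : p ∣ (h (u₀, v) - h (v, u₀)) := (dvd_add_right hdvdsum).mp (by
    rwa [add_comm] at hdvdall)
  -- but exactly one of the two directions is a fractional edge, the other is 0
  rw [Gp_adj] at hadj
  rcases hadj.2 with hFr | hFr
  · have hnot : (u₀, v) ∉ E := Hanti _ _ hFr.1
    have h0 : h (u₀, v) = 0 := by
      by_contra hx; exact hnot (hsupp _ hx)
    obtain ⟨-, hl1, hl2⟩ := hFr
    rw [h0] at hdvd0
    have := Int.eq_zero_of_abs_lt_dvd hdvd0 (by
      rw [abs_of_nonpos (by omega)]; omega)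
    omega
  · have hnot : (v, u₀) ∉ E := Hanti _ _ hFr.1
    have h0 : h (v, u₀) = 0 := by
      by_contra hx; exact hnot (hsupp _ hx)
    obtain ⟨-, hl1, hl2⟩ := hFr
    rw [h0] at hdvd0
    have := Int.eq_zero_of_abs_lt_dvd hdvd0 (by
      rw [abs_of_pos (by omega)]; omega)
    omega


lemma push (hp : 0 < p)
    (Hloop : ∀ v : V, (v, v) ∉ E)
    (Hanti : ∀ a b : V, (a, b) ∈ E → (b, a) ∉ E)
    (hsupp : ∀ e, h e ≠ 0 → e ∈ E) (hrange : ∀ e, 0 ≤ h e ∧ h e ≤ p)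
    (e₀ : V × V) (hfr : Frp p E h e₀) :
    ∃ θ : V × V → ℤ, (∃ e, θ e ≠ 0) ∧
      (∀ e, θ e ≠ 0 → Frp p E h e ∧ (θ e = 1 ∨ θ e = -1)) ∧
      (∀ v, chainBd θ v = 0 ∨
        ((chainBd θ v = 1 ∨ chainBd θ v = -1) ∧ ¬ p ∣ chainBd h v)) := by
  classical
  have hσ := sg_spec p E h
  have hne₀ : e₀.1 ≠ e₀.2 := by
    intro hx
    have h2 : (e₀.1, e₀.2) ∈ E := by rw [Prod.mk.eta]; exact hfr.1
    rw [hx] at h2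
    exact Hloop _ h2
  have hadj₀ : (Gp p E h).Adj e₀.1 e₀.2 := by
    rw [Gp_adj]
    exact ⟨hne₀, Or.inl (by rwa [Prod.mk.eta])⟩
  by_cases hac : (Gp p E h).IsAcyclic
  swap
  · -- there is a cycle; push around it
    simp only [SimpleGraph.IsAcyclic, not_forall, not_not] at hac
    obtain ⟨v, w, hw⟩ := hac
    have hnd : w.edges.Nodup := hw.isCircuit.isTrail.edges_nodup
    cases w with
    | nil => have := hw.three_le_length; simp at this
    | cons hadj q =>
      refine ⟨wchain (sg p E h) (SimpleGraph.Walk.cons hadj q),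
        wchain_ne_zero (sg p E h) hσ hadj q hnd (sg_ne p E h), ?_, ?_⟩
      · intro e he
        exact ⟨(wchain_supp (sg p E h) hσ _ e he).1, wchain_val (sg p E h) hσ _ hnd e he⟩
      · intro v'
        left
        rw [wchain_bd (sg p E h) (VS E) (sg_suppU p E h) (sg_bd p E h) _ v', sub_self]
  · -- acyclic case: take a maximal path
    set G := Gp p E h with hG
    set S : Set ℕ := {m | ∃ (a b : V) (w : G.Walk a b), w.IsPath ∧ w.length = m} with hS
    have h1S : (1 : ℕ) ∈ S := by
      refine ⟨e₀.1, e₀.2, SimpleGraph.Walk.cons hadj₀ SimpleGraph.Walk.nil, ?_, rfl⟩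
      rw [SimpleGraph.Walk.cons_isPath_iff]
      exact ⟨SimpleGraph.Walk.IsPath.nil, by simp [hne₀]⟩
    have hbdd : ∀ m ∈ S, m ≤ (VS E).card := by
      rintro m ⟨a', b', w', hw', hlen'⟩
      have hnod : w'.support.tail.Nodup := hw'.support_nodup.sublist (List.tail_sublist _)
      have hsub : w'.support.tail.toFinset ⊆ VS E := by
        intro x hx
        rw [List.mem_toFinset, ← SimpleGraph.Walk.map_snd_darts, List.mem_map] at hx
        obtain ⟨d, _, rfl⟩ := hx
        have hadj : (Gp p E h).Adj d.toProd.1 d.toProd.2 := d.adj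
        rw [Gp_adj] at hadj
        rcases hadj.2 with hFr | hFr
        · exact (mem_VS_of_mem_E E hFr.1).2
        · exact (mem_VS_of_mem_E E hFr.1).1
      calc m = w'.support.tail.length := by
              have := SimpleGraph.Walk.length_support w'
              have := List.length_tail (l := w'.support)
              omega
        _ = w'.support.tail.toFinset.card := (List.toFinset_card_of_nodup hnod).symm
        _ ≤ (VS E).card := Finset.card_le_card hsub
    have hBdd : BddAbove S := ⟨(VS E).card, fun m hm => hbdd m hm⟩
    set n := sSup S with hn
    have hnS : n ∈ S := Nat.sSup_mem ⟨1, h1S⟩ hBdd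
    have hn1 : 1 ≤ n := le_csSup hBdd h1S
    -- endpoint analysis for any maximal path
    have endpt : ∀ (a' b' : V) (w' : G.Walk a' b'), w'.IsPath → w'.length = n →
        ∃ u₀, G.Adj a' u₀ ∧ ∀ u, G.Adj a' u → u = u₀ := by
      intro a' b' w' hw' hlen'
      have hmemsup : ∀ u, G.Adj a' u → u ∈ w'.support := by
        intro u hadj
        by_contra hns
        have hlong : (SimpleGraph.Walk.cons hadj.symm w').IsPath :=
          (SimpleGraph.Walk.cons_isPath_iff _ _).2 ⟨hw', hns⟩
        have hmem : (n + 1) ∈ S := ⟨u, b', _, hlong, by simp [hlen']⟩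
        have := le_csSup hBdd hmem
        omega
      have hedge : ∀ u, G.Adj a' u → s(a', u) ∈ w'.edges := by
        intro u hadj
        have hu := hmemsup u hadj
        have hqp : (w'.takeUntil u hu).IsPath := hw'.takeUntil hu
        by_cases hmem : s(u, a') ∈ (w'.takeUntil u hu).edges
        · have : s(u, a') ∈ w'.edges := SimpleGraph.Walk.edges_takeUntil_subset _ hu hmem
          rwa [Sym2.eq_swap] at this
        · exact absurd ((SimpleGraph.Walk.cons_isCycle_iff _ hadj.symm).2 ⟨hqp, hmem⟩)
            (hac _)
      cases w' with
      | nil => rw [SimpleGraph.Walk.length_nil] at hlen'; omega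
      | @cons _ y _ hadj2 q2 =>
        have hnsup : a' ∉ q2.support := (SimpleGraph.Walk.cons_isPath_iff _ _).1 hw' |>.2
        refine ⟨y, hadj2, ?_⟩
        intro u hadjU
        have he := hedge u hadjU
        rw [SimpleGraph.Walk.edges_cons] at he
        rcases List.mem_cons.mp he with heq | hmem
        · rw [Sym2.eq_iff] at heq
          rcases heq with ⟨-, rfl⟩ | ⟨h1, h2⟩
          · rfl
          · exact absurd (h1 ▸ q2.start_mem_support) hnsup
        · exact absurd (q2.fst_mem_support_of_mem_edges hmem) hnsup
    obtain ⟨a, b, w, hw, hlen⟩ := hnS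
    obtain ⟨uA, hadjA, huniqA⟩ := endpt a b w hw hlen
    obtain ⟨uB, hadjB, huniqB⟩ := endpt b a w.reverse hw.reverse
      (by rw [SimpleGraph.Walk.length_reverse, hlen])
    have hnodvdA : ¬ p ∣ chainBd h a := no_dvd_bd hp Hanti hsupp hrange a uA hadjA huniqA
    have hnodvdB : ¬ p ∣ chainBd h b := no_dvd_bd hp Hanti hsupp hrange b uB hadjB huniqB
    have hab : a ≠ b := by
      cases w with
      | nil => rw [SimpleGraph.Walk.length_nil] at hlen; omega
      | @cons _ y _ hadj2 q2 =>
        have hnsup : a ∉ q2.support := (SimpleGraph.Walk.cons_isPath_iff _ _).1 hw |>.2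
        intro hx
        exact hnsup (hx ▸ q2.end_mem_support)
    have hnd : w.edges.Nodup := hw.isTrail.edges_nodup
    have hbd : ∀ v', chainBd (wchain (sg p E h) w) v'
        = (if v' = b then 1 else 0) - (if v' = a then 1 else 0) :=
      wchain_bd (sg p E h) (VS E) (sg_suppU p E h) (sg_bd p E h) w
    have hnz : ∃ e, wchain (sg p E h) w e ≠ 0 := by
      cases w with
      | nil => rw [SimpleGraph.Walk.length_nil] at hlen; omega
      | cons hadj2 q2 => exact wchain_ne_zero (sg p E h) hσ hadj2 q2 hnd (sg_ne p E h)
    refine ⟨wchain (sg p E h) w, hnz, ?_, ?_⟩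
    · intro e he
      exact ⟨(wchain_supp (sg p E h) hσ _ e he).1, wchain_val (sg p E h) hσ _ hnd e he⟩
    · intro v'
      rw [hbd v']
      by_cases hva : v' = a <;> by_cases hvb : v' = b
      · exact absurd (hva ▸ hvb) hab
      · subst hva
        right
        simp only [if_neg hvb, if_pos rfl]
        exact ⟨Or.inr (by simp), hnodvdA⟩
      · subst hvb
        right
        simp only [if_pos rfl, if_neg hva]
        exact ⟨Or.inl (by simp), hnodvdB⟩
      · left; simp [hva, hvb]

end Push


section Rounding

lemma chainBd_sub (f g : V × V → ℤ) (U : Finset V)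
    (hf : ∀ e : V × V, f e ≠ 0 → e.1 ∈ U ∧ e.2 ∈ U)
    (hg : ∀ e : V × V, g e ≠ 0 → e.1 ∈ U ∧ e.2 ∈ U) (v : V) :
    chainBd (f - g) v = chainBd f v - chainBd g v := by
  have hfg : ∀ e : V × V, (f - g) e ≠ 0 → e.1 ∈ U ∧ e.2 ∈ U := by
    intro e he
    by_cases h1 : f e = 0
    · exact hg e (by simpa [Pi.sub_apply, h1, sub_eq_zero] using he)
    · exact hf e h1
  rw [chainBd_eq_sum (f - g) U hfg, chainBd_eq_sum f U hf, chainBd_eq_sum g U hg,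
    ← Finset.sum_sub_distrib]
  refine Finset.sum_congr rfl fun u _ => ?_
  simp only [Pi.sub_apply]; ring

omit [DecidableEq V] in
lemma int_key {p a t : ℤ} (hp : 2 ≤ p) (ht : p ∣ t) (h1 : a - a % p ≤ t)
    (h2 : t ≤ a - a % p + (if p ∣ a then 0 else p)) :
    |a - t| ≤ p - 1 ∧ (p ∣ a → t = a) := by
  have hp0 : (0 : ℤ) < p := by omega
  have hr0 : 0 ≤ a % p := Int.emod_nonneg a (by omega)
  have hrp : a % p < p := Int.emod_lt_of_pos a hp0
  have hdm := Int.mul_ediv_add_emod a p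
  by_cases hpa : p ∣ a
  · have hr : a % p = 0 := Int.emod_eq_zero_of_dvd hpa
    rw [if_pos hpa] at h2
    have hta : t = a := by omega
    subst hta
    rw [sub_self, abs_zero]
    exact ⟨by omega, fun _ => rfl⟩
  · rw [if_neg hpa] at h2
    have hr1 : a % p ≠ 0 := fun hx => hpa (Int.dvd_of_emod_eq_zero hx)
    obtain ⟨k, hk⟩ : p ∣ (t - (a - a % p)) := by
      refine dvd_sub ht ⟨a / p, by omega⟩
    have hk1 : p * k ≤ p * 1 := by rw [mul_one]; omega
    have hk0 : p * 0 ≤ p * k := by rw [mul_zero]; omega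
    have hk0' : 0 ≤ k := le_of_mul_le_mul_left hk0 hp0
    have hk1' : k ≤ 1 := le_of_mul_le_mul_left hk1 hp0
    have : k = 0 ∨ k = 1 := by omega
    rcases this with rfl | rfl
    · rw [mul_zero] at hk
      refine ⟨by rw [abs_le]; omega, fun hx => absurd hx hpa⟩
    · rw [mul_one] at hk
      refine ⟨by rw [abs_le]; omega, fun hx => absurd hx hpa⟩

variable {p : ℤ} {E : Finset (V × V)}

lemma rounding (hp : 2 ≤ p)
    (Hloop : ∀ v : V, (v, v) ∉ E)
    (Hanti : ∀ a b : V, (a, b) ∈ E → (b, a) ∉ E)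
    (c : V × V → ℤ)
    (hcE : ∀ e, c e ≠ 0 ↔ e ∈ E)
    (hcrange : ∀ e, 0 ≤ c e ∧ c e ≤ p - 1) :
    ∃ hh : V × V → ℤ, (∀ e, hh e ≠ 0 → e ∈ E) ∧ (∀ e, hh e = 0 ∨ hh e = p) ∧
      (∀ v, p ∣ chainBd hh v) ∧
      (∀ v, |chainBd c v - chainBd hh v| ≤ p - 1) ∧
      (∀ v, p ∣ chainBd c v → chainBd hh v = chainBd c v) := by
  classical
  have hp0 : (0 : ℤ) < p := by omega
  set α : V → ℤ := fun v => chainBd c v - chainBd c v % p with hα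
  set β : V → ℤ := fun v => α v + (if p ∣ chainBd c v then 0 else p) with hβ
  have hdvdα : ∀ v, p ∣ α v := by
    intro v
    have := Int.mul_ediv_add_emod (chainBd c v) p
    exact ⟨chainBd c v / p, by simp only [hα]; omega⟩
  have hdvdβ : ∀ v, p ∣ β v := by
    intro v
    refine dvd_add (hdvdα v) ?_
    split_ifs <;> simp
  set Feas : (V × V → ℤ) → Prop := fun x =>
    (∀ e, x e ≠ 0 → e ∈ E) ∧ (∀ e, 0 ≤ x e ∧ x e ≤ p) ∧
    (∀ v, α v ≤ chainBd x v ∧ chainBd x v ≤ β v) with hFeas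
  set Φ : (V × V → ℤ) → ℤ := fun x => ∑ e ∈ E, x e * (p - x e) with hΦdef
  have hUx : ∀ x : V × V → ℤ, (∀ e, x e ≠ 0 → e ∈ E) →
      ∀ e : V × V, x e ≠ 0 → e.1 ∈ VS E ∧ e.2 ∈ VS E := by
    intro x hx e he
    exact mem_VS_of_mem_E E (hx e he)
  have hFeasc : Feas c := by
    refine ⟨fun e he => (hcE e).1 he, fun e => ⟨(hcrange e).1, by have := (hcrange e).2; omega⟩, ?_⟩
    intro v
    have hr0 : 0 ≤ chainBd c v % p := Int.emod_nonneg _ (by omega)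
    have hrp : chainBd c v % p < p := Int.emod_lt_of_pos _ hp0
    constructor
    · simp only [hα]; omega
    · simp only [hβ, hα]
      split_ifs with hdv
      · have : chainBd c v % p = 0 := Int.emod_eq_zero_of_dvd hdv
        omega
      · omega
  obtain ⟨m₀, ⟨h₀, hFeas₀, hΦ₀⟩, hleast⟩ :=
    Int.exists_least_of_bdd (P := fun m => ∃ x, Feas x ∧ Φ x = m)
      ⟨0, by
        rintro z ⟨x, hx, rfl⟩
        refine Finset.sum_nonneg fun e _ => ?_
        have := hx.2.1 e
        nlinarith [this.1, this.2]⟩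
      ⟨Φ c, c, hFeasc, rfl⟩
  -- the minimiser is integral
  have hint : ∀ e, h₀ e = 0 ∨ h₀ e = p := by
    intro e
    by_cases heE : e ∈ E
    swap
    · left
      by_contra hx
      exact heE (hFeas₀.1 e hx)
    by_contra hx
    push_neg at hx
    have hfr : Frp p E h₀ e := by
      refine ⟨heE, ?_, ?_⟩
      · have := (hFeas₀.2.1 e).1; omega
      · have := (hFeas₀.2.1 e).2
        rcases lt_or_eq_of_le this with h | h
        · exact h
        · exact absurd h hx.2
    obtain ⟨θ, ⟨e₁, he₁⟩, hθsupp, hθbd⟩ :=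
      push hp0 Hloop Hanti hFeas₀.1 (fun e => hFeas₀.2.1 e) e hfr
    have hθU : ∀ e : V × V, θ e ≠ 0 → e.1 ∈ VS E ∧ e.2 ∈ VS E := by
      intro e he
      exact mem_VS_of_mem_E E (hθsupp e he).1.1
    have hθE : ∀ e, θ e ≠ 0 → e ∈ E := fun e he => (hθsupp e he).1.1
    have hbdadd : ∀ v, chainBd (h₀ + θ) v = chainBd h₀ v + chainBd θ v :=
      chainBd_add h₀ θ (VS E) (hUx h₀ hFeas₀.1) hθU
    have hbdsub : ∀ v, chainBd (h₀ - θ) v = chainBd h₀ v - chainBd θ v :=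
      chainBd_sub h₀ θ (VS E) (hUx h₀ hFeas₀.1) hθU
    have hsuppPM : ∀ (s : ℤ), s = 1 ∨ s = -1 → ∀ e, h₀ e + s * θ e ≠ 0 → e ∈ E := by
      intro s hs e he
      by_cases h1 : θ e = 0
      · exact hFeas₀.1 e (by simpa [h1] using he)
      · exact hθE e h1
    have hrangePM : ∀ (s : ℤ), s = 1 ∨ s = -1 → ∀ e, 0 ≤ h₀ e + s * θ e ∧ h₀ e + s * θ e ≤ p := by
      intro s hs e
      by_cases h1 : θ e = 0
      · simp only [h1, mul_zero, add_zero]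
        exact hFeas₀.2.1 e
      · obtain ⟨⟨-, hh1, hh2⟩, hval⟩ := hθsupp e h1
        rcases hs with rfl | rfl <;> rcases hval with hv | hv <;> rw [hv] <;> constructor <;> omega
    have hbdPM : ∀ v, α v ≤ chainBd h₀ v + chainBd θ v ∧ chainBd h₀ v + chainBd θ v ≤ β v ∧
        α v ≤ chainBd h₀ v - chainBd θ v ∧ chainBd h₀ v - chainBd θ v ≤ β v := by
      intro v
      have hb := hFeas₀.2.2 v
      rcases hθbd v with h0 | ⟨hval, hndvd⟩
      · rw [h0]; omega
      · have hne1 : chainBd h₀ v ≠ α v := by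
          intro hx; exact hndvd (hx ▸ hdvdα v)
        have hne2 : chainBd h₀ v ≠ β v := by
          intro hx; exact hndvd (hx ▸ hdvdβ v)
        rcases hval with hv | hv <;> rw [hv] <;> omega
    have hFeasP : Feas (h₀ + θ) := by
      refine ⟨fun e he => hsuppPM 1 (Or.inl rfl) e (by simpa using he),
        fun e => by simpa using hrangePM 1 (Or.inl rfl) e, fun v => ?_⟩
      rw [hbdadd v]
      exact ⟨(hbdPM v).1, (hbdPM v).2.1⟩
    have hFeasM : Feas (h₀ - θ) := by
      refine ⟨fun e he => hsuppPM (-1) (Or.inr rfl) e (by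
          simpa [sub_eq_add_neg, neg_mul] using he),
        fun e => by simpa [sub_eq_add_neg, neg_mul] using hrangePM (-1) (Or.inr rfl) e,
        fun v => ?_⟩
      rw [hbdsub v]
      exact ⟨(hbdPM v).2.2.1, (hbdPM v).2.2.2⟩
    -- the potential strictly decreases for one of the two pushes
    have hΦsum : Φ (h₀ + θ) + Φ (h₀ - θ) = 2 * Φ h₀ - 2 * ∑ e ∈ E, θ e ^ 2 := by
      simp only [hΦdef]
      rw [← Finset.sum_add_distrib, Finset.mul_sum, Finset.mul_sum, ← Finset.sum_sub_distrib]
      refine Finset.sum_congr rfl fun e _ => ?_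
      simp only [Pi.add_apply, Pi.sub_apply]
      ring
    have hsq : 1 ≤ ∑ e ∈ E, θ e ^ 2 := by
      have he₁E : e₁ ∈ E := hθE e₁ he₁
      have h1 : (1 : ℤ) ≤ θ e₁ ^ 2 := by
        rcases (hθsupp e₁ he₁).2 with hv | hv <;> rw [hv] <;> norm_num
      calc (1 : ℤ) ≤ θ e₁ ^ 2 := h1
        _ ≤ ∑ e ∈ E, θ e ^ 2 :=
          Finset.single_le_sum (fun e _ => sq_nonneg (θ e)) he₁E
    have hP := hleast (Φ (h₀ + θ)) ⟨h₀ + θ, hFeasP, rfl⟩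
    have hM := hleast (Φ (h₀ - θ)) ⟨h₀ - θ, hFeasM, rfl⟩
    omega
  -- conclusions
  have hdvdall : ∀ v, p ∣ chainBd h₀ v := by
    intro v
    rw [chainBd_eq_sum h₀ (VS E) (hUx h₀ hFeas₀.1) v]
    refine Finset.dvd_sum fun u _ => dvd_sub ?_ ?_
    · rcases hint (u, v) with hz | hz <;> simp [hz]
    · rcases hint (v, u) with hz | hz <;> simp [hz]
  refine ⟨h₀, hFeas₀.1, hint, hdvdall, ?_, ?_⟩
  · intro v
    have hb := hFeas₀.2.2 v
    exact (int_key hp (hdvdall v) hb.1 hb.2).1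
  · intro v hdvdc
    have hb := hFeas₀.2.2 v
    exact (int_key hp (hdvdall v) hb.1 hb.2).2 hdvdc

end Rounding

end Stmt3


/-- Statement 𝒫₁ in the combinatorial segment model in `ℝⁿ`, with constant `C = p − 1`:
any polyhedral 1-chain with multiplicities in `{0, …, p−1}` can be reoriented edge by edge
to a chain `c'` of the same class modulo `p` whose mass is at most `(p−1)` times the mass
modulo `p` of `c`, and whose boundary mass is at most `(p−1)` times the mass of any
finitely supported `r` congruent to `∂c` modulo `p`. -/
theorem statement3 (p : ℤ) (hp : 2 ≤ p) (n : ℕ) (hn : 1 ≤ n)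
    (c : EuclideanSpace ℝ (Fin n) × EuclideanSpace ℝ (Fin n) → ℤ)
    (hfin : (Function.support c).Finite)
    (hloop : ∀ v : EuclideanSpace ℝ (Fin n), c (v, v) = 0)
    (hanti : ∀ a b : EuclideanSpace ℝ (Fin n), 0 < c (a, b) → c (b, a) = 0)
    (hrange : ∀ a b : EuclideanSpace ℝ (Fin n), 0 ≤ c (a, b) ∧ c (a, b) ≤ p - 1) :
    ∃ c' : EuclideanSpace ℝ (Fin n) × EuclideanSpace ℝ (Fin n) → ℤ,
      (Function.support c').Finite ∧
      (∀ v : EuclideanSpace ℝ (Fin n), c' (v, v) = 0) ∧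
      (∀ a b : EuclideanSpace ℝ (Fin n), 0 < c' (a, b) → c' (b, a) = 0) ∧
      (∀ a b : EuclideanSpace ℝ (Fin n), 0 < c (a, b) →
        (c' (a, b) = c (a, b) ∧ c' (b, a) = 0) ∨
        (c' (a, b) = 0 ∧ c' (b, a) = p - c (a, b))) ∧
      (∀ a b : EuclideanSpace ℝ (Fin n), c (a, b) = 0 → c (b, a) = 0 → c' (a, b) = 0) ∧
      ((∑ᶠ e : EuclideanSpace ℝ (Fin n) × EuclideanSpace ℝ (Fin n),
          (|c' e| : ℝ) * ‖e.1 - e.2‖) ≤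
        (p - 1 : ℝ) *
          ∑ᶠ e : EuclideanSpace ℝ (Fin n) × EuclideanSpace ℝ (Fin n),
            (if 0 < c e then ((min (c e) (p - c e) : ℤ) : ℝ) * ‖e.1 - e.2‖ else 0)) ∧
      (∀ r : EuclideanSpace ℝ (Fin n) → ℤ, (Function.support r).Finite →
        (∀ v : EuclideanSpace ℝ (Fin n), r v ≡ chainBd c v [ZMOD p]) →
        (∑ᶠ v : EuclideanSpace ℝ (Fin n), |chainBd c' v|) ≤
          (p - 1) * ∑ᶠ v : EuclideanSpace ℝ (Fin n), |r v|) := by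
  classical
  set E : Finset (EuclideanSpace ℝ (Fin n) × EuclideanSpace ℝ (Fin n)) := hfin.toFinset with hEdef
  have hEmem : ∀ e : EuclideanSpace ℝ (Fin n) × EuclideanSpace ℝ (Fin n), e ∈ E ↔ c e ≠ 0 := fun e => hfin.mem_toFinset
  have hcE : ∀ e : EuclideanSpace ℝ (Fin n) × EuclideanSpace ℝ (Fin n), c e ≠ 0 ↔ e ∈ E := fun e => (hEmem e).symm
  have hr : ∀ e : EuclideanSpace ℝ (Fin n) × EuclideanSpace ℝ (Fin n), 0 ≤ c e ∧ c e ≤ p - 1 := by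
    intro e
    have := hrange e.1 e.2
    rwa [Prod.mk.eta] at this
  have hpos : ∀ e : EuclideanSpace ℝ (Fin n) × EuclideanSpace ℝ (Fin n), e ∈ E ↔ 0 < c e := by
    intro e
    rw [hEmem]
    have := (hr e).1
    constructor
    · intro hne; omega
    · intro hlt; omega
  have Hloop : ∀ v : EuclideanSpace ℝ (Fin n), (v, v) ∉ E := by
    intro v hv
    rw [hEmem] at hv
    exact hv (hloop v)
  have Hanti : ∀ a b : EuclideanSpace ℝ (Fin n), (a, b) ∈ E → (b, a) ∉ E := by
    intro a b hab hba
    rw [hpos] at hab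
    rw [hEmem] at hba
    exact hba (hanti a b hab)
  obtain ⟨h₀, hhE, hh0p, hhdvd, hhclose, hhexact⟩ :=
    Stmt3.rounding hp Hloop Hanti c hcE hr
  have hp0 : (0 : ℤ) < p := by omega
  set c' : EuclideanSpace ℝ (Fin n) × EuclideanSpace ℝ (Fin n) → ℤ := fun e =>
    if e ∈ E then (if h₀ e = 0 then c e else 0)
    else (if ((e.2, e.1) ∈ E ∧ h₀ (e.2, e.1) = p) then p - c (e.2, e.1) else 0) with hc'def
  -- basic evaluation lemmas
  have c'E : ∀ a b : EuclideanSpace ℝ (Fin n), (a, b) ∈ E → c' (a, b) = if h₀ (a, b) = 0 then c (a, b) else 0 := by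
    intro a b hab
    simp only [hc'def, if_pos hab]
  have c'S : ∀ a b : EuclideanSpace ℝ (Fin n), (a, b) ∈ E → c' (b, a) = if h₀ (a, b) = p then p - c (a, b) else 0 := by
    intro a b hab
    have hba : (b, a) ∉ E := Hanti a b hab
    simp only [hc'def, if_neg hba]
    by_cases hcond : h₀ (a, b) = p
    · rw [if_pos ⟨hab, hcond⟩, if_pos hcond]
    · rw [if_neg (by tauto), if_neg hcond]
  have c'N : ∀ a b : EuclideanSpace ℝ (Fin n), (a, b) ∉ E → (b, a) ∉ E → c' (a, b) = 0 := by
    intro a b hab hba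
    simp only [hc'def, if_neg hab]
    rw [if_neg (by tauto)]
  have hc'supp : ∀ e : EuclideanSpace ℝ (Fin n) × EuclideanSpace ℝ (Fin n), c' e ≠ 0 → (e.1, e.2) ∈ E ∨ (e.2, e.1) ∈ E := by
    intro e he
    by_contra hx
    push_neg at hx
    rw [← Prod.mk.eta (p := e)] at he
    exact he (c'N e.1 e.2 hx.1 hx.2)
  have hczero : ∀ e : EuclideanSpace ℝ (Fin n) × EuclideanSpace ℝ (Fin n), e ∉ E → c e = 0 := by
    intro e he
    by_contra hx
    exact he ((hEmem e).2 hx)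
  have hhzero : ∀ e : EuclideanSpace ℝ (Fin n) × EuclideanSpace ℝ (Fin n), e ∉ E → h₀ e = 0 := by
    intro e he
    by_contra hx
    exact he (hhE e hx)
  -- key pointwise antisymmetrisation identity
  have haux : ∀ a b : EuclideanSpace ℝ (Fin n), (a, b) ∈ E →
      c' (a, b) - c' (b, a) = (c (a, b) - c (b, a)) - (h₀ (a, b) - h₀ (b, a)) := by
    intro a b hab
    have hba : (b, a) ∉ E := Hanti a b hab
    have hc0 : c (b, a) = 0 := hczero _ hba
    have hh0 : h₀ (b, a) = 0 := hhzero _ hba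
    rw [c'E a b hab, c'S a b hab, hc0, hh0]
    rcases hh0p (a, b) with hz | hz
    · rw [hz, if_pos rfl, if_neg (by omega)]
      ring
    · rw [hz, if_neg (by omega), if_pos rfl]
      ring
  have hkey : ∀ a b : EuclideanSpace ℝ (Fin n),
      c' (a, b) - c' (b, a) = (c (a, b) - c (b, a)) - (h₀ (a, b) - h₀ (b, a)) := by
    intro a b
    by_cases hab : (a, b) ∈ E
    · exact haux a b hab
    by_cases hba : (b, a) ∈ E
    · have := haux b a hba
      linarith
    · rw [c'N a b hab hba, c'N b a hba hab, hczero _ hab, hczero _ hba,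
        hhzero _ hab, hhzero _ hba]
      ring
  -- vertex sets
  set U : Finset (EuclideanSpace ℝ (Fin n)) := Stmt3.VS E with hUdef
  have hUc : ∀ e : EuclideanSpace ℝ (Fin n) × EuclideanSpace ℝ (Fin n), c e ≠ 0 → e.1 ∈ U ∧ e.2 ∈ U := by
    intro e he
    exact Stmt3.mem_VS_of_mem_E E ((hEmem e).2 he)
  have hUh : ∀ e : EuclideanSpace ℝ (Fin n) × EuclideanSpace ℝ (Fin n), h₀ e ≠ 0 → e.1 ∈ U ∧ e.2 ∈ U := by
    intro e he
    exact Stmt3.mem_VS_of_mem_E E (hhE e he)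
  have hUc' : ∀ e : EuclideanSpace ℝ (Fin n) × EuclideanSpace ℝ (Fin n), c' e ≠ 0 → e.1 ∈ U ∧ e.2 ∈ U := by
    intro e he
    rcases hc'supp e he with hmem | hmem
    · exact Stmt3.mem_VS_of_mem_E E hmem
    · have := Stmt3.mem_VS_of_mem_E E hmem
      exact ⟨this.2, this.1⟩
  -- the boundary identity
  have hbd' : ∀ v : EuclideanSpace ℝ (Fin n), chainBd c' v = chainBd c v - chainBd h₀ v := by
    intro v
    rw [Stmt3.chainBd_eq_sum c' U hUc' v, Stmt3.chainBd_eq_sum c U hUc v,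
      Stmt3.chainBd_eq_sum h₀ U hUh v, ← Finset.sum_sub_distrib]
    exact Finset.sum_congr rfl fun u _ => hkey u v
  refine ⟨c', ?_, ?_, ?_, ?_, ?_, ?_, ?_⟩
  · -- finite support
    apply Set.Finite.subset (Set.Finite.union E.finite_toSet (E.image Prod.swap).finite_toSet)
    intro e he
    rw [Function.mem_support] at he
    rcases hc'supp e he with hmem | hmem
    · left
      simpa using hmem
    · right
      simp only [Finset.coe_image, Set.mem_image, Finset.mem_coe]
      exact ⟨(e.2, e.1), hmem, by simp⟩
  · -- no loops
    intro v
    exact c'N v v (Hloop v) (Hloop v)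
  · -- antisymmetric support
    intro a b hab
    by_cases habE : (a, b) ∈ E
    · rw [c'S a b habE]
      rw [c'E a b habE] at hab
      by_cases hz : h₀ (a, b) = 0
      · rw [if_neg (by omega)]
      · rw [if_neg hz] at hab; omega
    by_cases hbaE : (b, a) ∈ E
    · rw [c'E b a hbaE]
      rw [c'S b a hbaE] at hab
      by_cases hz : h₀ (b, a) = p
      · rw [if_neg (by omega)]
      · rw [if_neg hz] at hab; omega
    · rw [c'N a b habE hbaE] at hab; omega
  · -- the dichotomy
    intro a b hab
    have habE : (a, b) ∈ E := (hpos _).2 hab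
    rcases hh0p (a, b) with hz | hz
    · left
      rw [c'E a b habE, c'S a b habE, hz, if_pos rfl, if_neg (by omega)]
      exact ⟨rfl, rfl⟩
    · right
      rw [c'E a b habE, c'S a b habE, hz, if_neg (by omega), if_pos rfl]
      exact ⟨rfl, rfl⟩
  · -- zero on doubly-zero pairs
    intro a b h1 h2
    refine c'N a b ?_ ?_
    · rw [hEmem]; simpa using h1
    · rw [hEmem]; simpa using h2
  · -- mass bound
    set D : Finset (EuclideanSpace ℝ (Fin n) × EuclideanSpace ℝ (Fin n)) := E ∪ E.image Prod.swap with hDdef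
    have hdisj : Disjoint E (E.image Prod.swap) := by
      rw [Finset.disjoint_left]
      intro e heE heI
      obtain ⟨e', he'E, rfl⟩ := Finset.mem_image.mp heI
      rw [hpos] at heE he'E
      have := hanti e'.1 e'.2 (by rwa [Prod.mk.eta])
      rw [Prod.swap] at heE
      omega
    have hLHS : (∑ᶠ e : EuclideanSpace ℝ (Fin n) × EuclideanSpace ℝ (Fin n), (|c' e| : ℝ) * ‖e.1 - e.2‖)
        = ∑ e ∈ D, (|c' e| : ℝ) * ‖e.1 - e.2‖ := by
      apply finsum_eq_sum_of_support_subset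
      intro e he
      rw [Function.mem_support] at he
      have hc'ne : c' e ≠ 0 := by
        intro hx
        rw [hx] at he; simp at he
      rcases hc'supp e hc'ne with hmem | hmem
      · simp only [hDdef, Finset.coe_union, Set.mem_union, Finset.mem_coe]
        left; simpa using hmem
      · simp only [hDdef, Finset.coe_union, Set.mem_union, Finset.mem_coe]
        right
        exact Finset.mem_image.mpr ⟨(e.2, e.1), hmem, by simp⟩
    have hRHS : (∑ᶠ e : EuclideanSpace ℝ (Fin n) × EuclideanSpace ℝ (Fin n), (if 0 < c e then ((min (c e) (p - c e) : ℤ) : ℝ) * ‖e.1 - e.2‖ else 0))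
        = ∑ e ∈ E, (if 0 < c e then ((min (c e) (p - c e) : ℤ) : ℝ) * ‖e.1 - e.2‖ else 0) := by
      apply finsum_eq_sum_of_support_subset
      intro e he
      rw [Function.mem_support] at he
      have : 0 < c e := by
        by_contra hx
        rw [if_neg hx] at he
        exact he rfl
      exact (hpos e).2 this
    rw [hLHS, hRHS, hDdef, Finset.sum_union hdisj,
      Finset.sum_image (fun x _ y _ hxy => Prod.swap_injective hxy), Finset.mul_sum,
      ← Finset.sum_add_distrib]
    refine Finset.sum_le_sum fun e heE => ?_
    have hce : 0 < c e := (hpos e).1 heE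
    rw [if_pos hce]
    have hce2 := (hr e).2
    -- integer inequality
    have hint : |c' e| + |c' (Prod.swap e)| ≤ (p - 1) * min (c e) (p - c e) := by
      have heE' : (e.1, e.2) ∈ E := by rwa [Prod.mk.eta]
      have h1 := c'E e.1 e.2 heE'
      have h2 := c'S e.1 e.2 heE'
      rw [Prod.mk.eta] at h1
      have hswap : Prod.swap e = (e.2, e.1) := rfl
      rw [hswap]
      have hc12 : c (e.1, e.2) = c e := by rw [Prod.mk.eta]
      have hmin1 : 1 ≤ min (c e) (p - c e) := le_min (by omega) (by omega)
      rcases hh0p e with hz | hz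
      · rw [h1, if_pos hz, h2, hc12, if_neg (by rw [← Prod.mk.eta (p := e)] at hz; omega)]
        rw [abs_of_pos hce, abs_zero, add_zero]
        nlinarith
      · rw [h1, if_neg (by omega), h2, hc12, if_pos (by rwa [Prod.mk.eta])]
        rw [abs_zero, zero_add, abs_of_pos (by omega)]
        nlinarith
    have hnorm : ‖(Prod.swap e).1 - (Prod.swap e).2‖ = ‖e.1 - e.2‖ := by
      rw [Prod.fst_swap, Prod.snd_swap, norm_sub_rev]
    rw [hnorm, ← add_mul, ← mul_assoc]
    apply mul_le_mul_of_nonneg_right _ (norm_nonneg _)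
    have : ((|c' e| + |c' (Prod.swap e)| : ℤ) : ℝ) ≤ (((p - 1) * min (c e) (p - c e) : ℤ) : ℝ) :=
      Int.cast_le.mpr hint
    push_cast at this ⊢
    linarith
  · -- boundary bound
    intro r hrfin hrmod
    have hpt : ∀ v : EuclideanSpace ℝ (Fin n), |chainBd c' v| ≤ (p - 1) * |r v| := by
      intro v
      have hcc := hbd' v
      have hmod : p ∣ (chainBd c v - r v) := (hrmod v).dvd
      by_cases hr0 : r v = 0
      · have hdvdc : p ∣ chainBd c v := by
          rw [hr0, sub_zero] at hmod; exact hmod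
        rw [hcc, hhexact v hdvdc, sub_self, abs_zero, hr0, abs_zero, mul_zero]
      · have h1 : |chainBd c' v| ≤ p - 1 := by
          rw [hcc]; exact hhclose v
        have h2 : 1 ≤ |r v| := Int.one_le_abs (by omega)
        nlinarith
    have hsupbd : ∀ v : EuclideanSpace ℝ (Fin n), v ∉ U → chainBd c' v = 0 := by
      intro v hv
      rw [Stmt3.chainBd_eq_sum c' U hUc' v]
      apply Finset.sum_eq_zero
      intro u hu
      have h1 : c' (u, v) = 0 := by
        by_contra hx
        exact hv (hUc' (u, v) hx).2
      have h2 : c' (v, u) = 0 := by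
        by_contra hx
        exact hv (hUc' (v, u) hx).1
      rw [h1, h2, sub_zero]
    set Wfin : Finset (EuclideanSpace ℝ (Fin n)) := U ∪ hrfin.toFinset with hWfin
    have hL : (∑ᶠ v : EuclideanSpace ℝ (Fin n), |chainBd c' v|) = ∑ v ∈ Wfin, |chainBd c' v| := by
      apply finsum_eq_sum_of_support_subset
      intro v hv
      rw [Function.mem_support] at hv
      have : chainBd c' v ≠ 0 := by
        intro hx; rw [hx] at hv; simp at hv
      simp only [hWfin, Finset.coe_union, Set.mem_union, Finset.mem_coe]
      left
      by_contra hx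
      exact this (hsupbd v hx)
    have hR : (∑ᶠ v : EuclideanSpace ℝ (Fin n), |r v|) = ∑ v ∈ Wfin, |r v| := by
      apply finsum_eq_sum_of_support_subset
      intro v hv
      rw [Function.mem_support] at hv
      have : r v ≠ 0 := by
        intro hx; rw [hx] at hv; simp at hv
      simp only [hWfin, Finset.coe_union, Set.mem_union, Finset.mem_coe]
      right
      rwa [hrfin.mem_toFinset]
    rw [hL, hR, Finset.mul_sum]
    exact Finset.sum_le_sum fun v _ => hpt v
end

section
/- Let G be a complete normed additive commutative group, let p be a positive integer, and let M : G → [0, ∞] be a functional satisfying, for all x, y ∈ G: M(x + y) ≤ M(x) + M(y); M(−x) = M(x); ‖x‖ ≤ M(x) (as extended nonnegative reals); and M(x) ≤ M(p • x). If T ∈ G and (Q_j)_{j ∈ ℕ} is a sequence in G such that M(T − p • Q_j) → 0 as j → ∞, then there exists Q ∈ G with T = p • Q. In particular, the subgroup {p • Q : Q ∈ G} is closed with respect to convergence in M. -/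
open Filter Topology

/-!
The hypotheses make `(x, y) ↦ M (x - y)` a pseudo-distance dominating the norm, and
`‖Q j - Q k‖ ≤ M (Q j - Q k) ≤ M (p • Q j - p • Q k) ≤ M (T - p • Q j) + M (T - p • Q k)`.
Hence `(Q j)` is Cauchy and converges to some `Q'`; then `p • Q j` tends both to `p • Q'` and,
being `M`-close to `T`, to `T`.
-/

theorem cauchySeq_of_tendsto_edist_zero {α β : Type*} [PseudoEMetricSpace α] [Nonempty β]
    [SemilatticeSup β] {u : β → α}
    (h : Tendsto (fun n : β × β => edist (u n.1) (u n.2)) (atTop ×ˢ atTop) (𝓝 0)) :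
    CauchySeq u := by
  rw [cauchySeq_iff_tendsto, ← prod_atTop_atTop_eq, uniformity_basis_edist.tendsto_right_iff]
  exact fun ε hε => h.eventually_lt_const hε

section Mass

variable {G : Type*} [NormedAddCommGroup G] {M : G → ENNReal}

theorem mass_sub_le_mass_sub_add_mass_sub (hsub : ∀ x y : G, M (x + y) ≤ M x + M y)
    (hsymm : ∀ x : G, M (-x) = M x) (T u v : G) : M (u - v) ≤ M (T - u) + M (T - v) := by
  calc M (u - v) = M ((T - v) + -(T - u)) := by congr 1; abel
    _ ≤ M (T - v) + M (-(T - u)) := hsub _ _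
    _ = M (T - u) + M (T - v) := by rw [hsymm, add_comm]

theorem tendsto_of_tendsto_mass_sub_zero (hnorm : ∀ x : G, (‖x‖₊ : ENNReal) ≤ M x)
    {ι : Type*} {l : Filter ι} {u : ι → G} {T : G}
    (hconv : Tendsto (fun j => M (T - u j)) l (𝓝 0)) : Tendsto u l (𝓝 T) := by
  rw [tendsto_iff_edist_tendsto_0]
  refine tendsto_of_tendsto_of_tendsto_of_le_of_le tendsto_const_nhds hconv
    (fun _ => zero_le) (fun j => ?_)
  rw [edist_comm, edist_eq_enorm_sub]
  exact hnorm _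

end Mass

theorem statement4_general {G : Type*} [NormedAddCommGroup G] [CompleteSpace G]
    (p : ℕ) (M : G → ENNReal)
    (hsub : ∀ x y : G, M (x + y) ≤ M x + M y)
    (hsymm : ∀ x : G, M (-x) = M x)
    (hnorm : ∀ x : G, (‖x‖₊ : ENNReal) ≤ M x)
    (hmul : ∀ x : G, M x ≤ M (p • x))
    (T : G) (Q : ℕ → G)
    (hconv : Tendsto (fun j : ℕ => M (T - p • Q j)) atTop (nhds 0)) :
    ∃ Q' : G, T = p • Q' := by
  have hdist (j k : ℕ) : edist (Q j) (Q k) ≤ M (T - p • Q j) + M (T - p • Q k) :=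
    calc edist (Q j) (Q k) ≤ M (Q j - Q k) := (edist_eq_enorm_sub _ _).trans_le (hnorm _)
      _ ≤ M (p • Q j - p • Q k) := smul_sub p (Q j) (Q k) ▸ hmul _
      _ ≤ M (T - p • Q j) + M (T - p • Q k) := mass_sub_le_mass_sub_add_mass_sub hsub hsymm _ _ _
  have hcauchy : CauchySeq Q := by
    refine cauchySeq_of_tendsto_edist_zero <|
      tendsto_of_tendsto_of_tendsto_of_le_of_le tendsto_const_nhds ?_ (fun _ => zero_le)
        (fun n => hdist n.1 n.2)
    simpa using (hconv.comp tendsto_fst).add (hconv.comp tendsto_snd)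
  obtain ⟨Q', hQ'⟩ := cauchySeq_tendsto_of_complete hcauchy
  exact ⟨Q', tendsto_nhds_unique (tendsto_of_tendsto_mass_sub_zero hnorm hconv)
    (hQ'.const_smul p)⟩

/-- Abstract closedness of the subgroup `{p • Q}` with respect to convergence in a
mass-like functional `M` on a complete normed abelian group: if `M` is subadditive,
symmetric, dominates the norm, and satisfies `M(x) ≤ M(p • x)`, and if
`M(T − p • Q_j) → 0`, then `T = p • Q` for some `Q`. -/
theorem statement4 {G : Type*} [NormedAddCommGroup G] [CompleteSpace G]
    (p : ℕ) (hp : 0 < p) (M : G → ENNReal)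
    (hsub : ∀ x y : G, M (x + y) ≤ M x + M y)
    (hsymm : ∀ x : G, M (-x) = M x)
    (hnorm : ∀ x : G, (‖x‖₊ : ENNReal) ≤ M x)
    (hmul : ∀ x : G, M x ≤ M (p • x))
    (T : G) (Q : ℕ → G)
    (hconv : Tendsto (fun j : ℕ => M (T - p • Q j)) atTop (nhds 0)) :
    ∃ Q' : G, T = p • Q' :=
  statement4_general p M hsub hsymm hnorm hmul T Q hconv
end

section
/- Let p ≥ 2 be an integer and let a, b, c be integers satisfying −p < 2a ≤ p, −p < 2b ≤ p, −p < 2c ≤ p, and c ≡ a − b (mod p). Then |a − b| ≤ (p − 1) · |c|. -/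
/-! The hypotheses on `a` and `b` force `|a - b| < p`. If `c ≠ 0` then `|c| ≥ 1`, so
`(p - 1)|c| ≥ p - 1 ≥ |a - b|`; if `c = 0` then `p ∣ a - b`, which with `|a - b| < p`
gives `a - b = 0`. -/

theorem abs_sub_lt_of_two_mul_mem_Ioc {α : Type*} [CommRing α] [LinearOrder α]
    [IsStrictOrderedRing α] {p a b : α} (ha₁ : -p < 2 * a) (ha₂ : 2 * a ≤ p)
    (hb₁ : -p < 2 * b) (hb₂ : 2 * b ≤ p) : |a - b| < p :=
  abs_sub_lt_iff.mpr ⟨by linarith, by linarith⟩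

theorem Int.abs_le_sub_one_mul_abs_of_modEq {p c d : ℤ} (hd : |d| < p)
    (h : c ≡ d [ZMOD p]) : |d| ≤ (p - 1) * |c| := by
  rcases eq_or_ne c 0 with rfl | hc
  · have hd₀ : d = 0 := Int.eq_zero_of_abs_lt_dvd (Int.modEq_zero_iff_dvd.mp h.symm) hd
    simp [hd₀]
  · calc |d| ≤ (p - 1) * 1 := by linarith [Int.le_sub_one_of_lt hd]
      _ ≤ (p - 1) * |c| :=
        mul_le_mul_of_nonneg_left (Int.one_le_abs hc) (by linarith [abs_nonneg d])

theorem statement6_general (p a b c : ℤ)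
    (ha₁ : -p < 2 * a) (ha₂ : 2 * a ≤ p)
    (hb₁ : -p < 2 * b) (hb₂ : 2 * b ≤ p)
    (hcong : c ≡ a - b [ZMOD p]) :
    |a - b| ≤ (p - 1) * |c| :=
  Int.abs_le_sub_one_mul_abs_of_modEq (abs_sub_lt_of_two_mul_mem_Ioc ha₁ ha₂ hb₁ hb₂) hcong

/-- The pointwise estimate behind White's Proposition: if `a`, `b`, `c` all lie in the
interval `(−p/2, p/2]` and `c ≡ a − b (mod p)`, then `|a − b| ≤ (p − 1)|c|`. -/
theorem statement6 (p a b c : ℤ) (hp : 2 ≤ p)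
    (ha₁ : -p < 2 * a) (ha₂ : 2 * a ≤ p)
    (hb₁ : -p < 2 * b) (hb₂ : 2 * b ≤ p)
    (hc₁ : -p < 2 * c) (hc₂ : 2 * c ≤ p)
    (hcong : c ≡ a - b [ZMOD p]) :
    |a - b| ≤ (p - 1) * |c| :=
  statement6_general p a b c ha₁ ha₂ hb₁ hb₂ hcong
end
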